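/- arXiv:math/0103126 — 2 statements merged into one kernel-verified Lean document; each statement's English description precedes it below -/
import Mathlib

section
/- Let V be the free ℤ-module with basis {|λ⟩} indexed by all Young diagrams, fix n ∈ ℤ and an integer l ≥ 3. For each residue i ∈ ℤ/lℤ define endomorphisms of V by: f_i|λ⟩ = −Σ |λ ∪ {B}⟩, the sum over all addable cells B = (r,c) of λ with n + c − r ≡ i (mod l); e_i|λ⟩ = −Σ |λ ∖ {B}⟩, the sum over all removable cells B = (r,c) of λ with n + c − r ≡ i (mod l); h_i|λ⟩ = (A_i(λ) − R_i(λ))·|λ⟩, where A_i(λ) and R_i(λ) are the numbers of addable, respectively removable, cells of λ of content congruent to i − n modulo l (all these sums are finite). Then for all i, j ∈ ℤ/lℤ: [e_i, f_j] = δ_{ij}·h_i; [h_i, h_j] = 0; [h_i, e_j] = a_{ij}·e_j and [h_i, f_j] = −a_{ij}·f_j, where a_{ij} = 2δ_{ij} − δ_{i,j+1} − δ_{i,j−1} with indices taken modulo l; [e_i, e_j] = 0 and [f_i, f_j] = 0 whenever i ≠ j and i − j ≢ ±1 (mod l); and [e_i,[e_i, e_j]] = 0 and [f_i,[f_i, f_j]]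 = 0 whenever i − j ≡ ±1 (mod l). In other words, these operators define a representation of the affine Lie algebra ŝl_l on V. -/
open scoped Classical

/-- A cell `p ∉ Y` is addable for the Young diagram `Y` if adding it yields a Young
diagram. -/
def Addable (Y : YoungDiagram) (p : ℕ × ℕ) : Prop :=
  p ∉ Y ∧ IsLowerSet (insert p (Y.cells : Set (ℕ × ℕ)))

/-- A cell `p ∈ Y` is removable for the Young diagram `Y` if removing it yields a
Young diagram. -/
def Removable (Y : YoungDiagram) (p : ℕ × ℕ) : Prop :=
  p ∈ Y ∧ IsLowerSet ((Y.cells : Set (ℕ × ℕ)) \ {p})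

/-- Add a box to a Young diagram (returning the diagram unchanged if the result
would not be a Young diagram). -/
noncomputable def addBox (Y : YoungDiagram) (p : ℕ × ℕ) : YoungDiagram :=
  if h : IsLowerSet (insert p (Y.cells : Set (ℕ × ℕ))) then
    ⟨insert p Y.cells, by rw [Finset.coe_insert]; exact h⟩
  else Y

/-- Remove a box from a Young diagram (returning the diagram unchanged if the result
would not be a Young diagram). -/
noncomputable def removeBox (Y : YoungDiagram) (p : ℕ × ℕ) : YoungDiagram :=
  if h : IsLowerSet ((Y.cells.erase p : Finset (ℕ × ℕ)) : Set (ℕ × ℕ)) then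
    ⟨Y.cells.erase p, h⟩
  else Y

/-- The Fock space: the free `ℤ`-module with basis `|λ⟩` indexed by Young diagrams. -/
abbrev FockV : Type := YoungDiagram →₀ ℤ

/-- `f_i |λ⟩ = −Σ |λ ∪ B⟩`, the (finite) sum over all addable cells `B = (r,c)` of
`λ` with `n + c − r ≡ i (mod l)`. -/
noncomputable def fRes (n : ℤ) (l : ℕ) (i : ZMod l) : Module.End ℤ FockV :=
  Finsupp.lift FockV ℤ YoungDiagram fun Y =>
    -(∑ᶠ p ∈ {p : ℕ × ℕ | Addable Y p ∧ ((n + (p.2 : ℤ) - (p.1 : ℤ) : ℤ) : ZMod l) = i},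
        Finsupp.single (addBox Y p) (1 : ℤ))

/-- `e_i |λ⟩ = −Σ |λ ∖ B⟩`, the (finite) sum over all removable cells `B = (r,c)` of
`λ` with `n + c − r ≡ i (mod l)`. -/
noncomputable def eRes (n : ℤ) (l : ℕ) (i : ZMod l) : Module.End ℤ FockV :=
  Finsupp.lift FockV ℤ YoungDiagram fun Y =>
    -(∑ᶠ p ∈ {p : ℕ × ℕ | Removable Y p ∧ ((n + (p.2 : ℤ) - (p.1 : ℤ) : ℤ) : ZMod l) = i},
        Finsupp.single (removeBox Y p) (1 : ℤ))

/-- `h_i |λ⟩ = (A_i(λ) − R_i(λ))·|λ⟩`, where `A_i(λ)` (resp. `R_i(λ)`) is the number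
of addable (resp. removable) cells of `λ` of content congruent to `i − n` mod `l`. -/
noncomputable def hRes (n : ℤ) (l : ℕ) (i : ZMod l) : Module.End ℤ FockV :=
  Finsupp.lift FockV ℤ YoungDiagram fun Y =>
    ((Set.ncard {p : ℕ × ℕ | Addable Y p ∧ (((p.2 : ℤ) - (p.1 : ℤ) : ℤ) : ZMod l) = i - (n : ZMod l)} : ℤ)
      - (Set.ncard {p : ℕ × ℕ | Removable Y p ∧ (((p.2 : ℤ) - (p.1 : ℤ) : ℤ) : ZMod l) = i - (n : ZMod l)} : ℤ))
      • Finsupp.single Y (1 : ℤ)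

/-- The entries of the Cartan matrix of `ŝl_l` (indices mod `l`):
`a_{ij} = 2δ_{ij} − δ_{i,j+1} − δ_{i,j−1}`. -/
def aCartanMod (l : ℕ) (i j : ZMod l) : ℤ :=
  (if i = j then 2 else 0) - (if i = j + 1 then 1 else 0) - (if i = j - 1 then 1 else 0)

lemma pair_le {a b c d : ℕ} : (a, b) ≤ (c, d) ↔ a ≤ c ∧ b ≤ d := Prod.mk_le_mk

lemma addable_iff {Y : YoungDiagram} {q : ℕ × ℕ} :
    Addable Y q ↔ q ∉ Y ∧ (q.1 = 0 ∨ (q.1 - 1, q.2) ∈ Y) ∧ (q.2 = 0 ∨ (q.1, q.2 - 1) ∈ Y) := by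
  obtain ⟨a, b⟩ := q
  constructor
  · rintro ⟨hq, hls⟩
    refine ⟨hq, ?_, ?_⟩
    · rcases Nat.eq_zero_or_pos a with h | h
      · exact Or.inl h
      · refine Or.inr ?_
        have hm : ((a - 1, b) : ℕ × ℕ) ∈ insert (a,b) (Y.cells : Set (ℕ × ℕ)) :=
          hls (pair_le.mpr ⟨by omega, le_refl _⟩) (Set.mem_insert _ _)
        rcases hm with hm | hm
        · exfalso; rw [Prod.mk.injEq] at hm; omega
        · simpa using hm
    · rcases Nat.eq_zero_or_pos b with h | h
      · exact Or.inl h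
      · refine Or.inr ?_
        have hm : ((a, b - 1) : ℕ × ℕ) ∈ insert (a,b) (Y.cells : Set (ℕ × ℕ)) :=
          hls (pair_le.mpr ⟨le_refl _, by omega⟩) (Set.mem_insert _ _)
        rcases hm with hm | hm
        · exfalso; rw [Prod.mk.injEq] at hm; omega
        · simpa using hm
  · rintro ⟨hq, h1, h2⟩
    refine ⟨hq, ?_⟩
    rintro ⟨y1, y2⟩ ⟨x1, x2⟩ hxy hy
    rw [pair_le] at hxy
    rcases hy with hy | hy
    · rw [Prod.mk.injEq] at hy
      obtain ⟨he1, he2⟩ := hy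
      by_cases hx : (x1, x2) = ((a, b) : ℕ × ℕ)
      · rw [hx]; exact Set.mem_insert _ _
      · refine Set.mem_insert_iff.mpr (Or.inr ?_)
        rw [Prod.mk.injEq] at hx
        by_cases h1' : x1 < a
        · rcases h1 with h1 | h1
          · omega
          · exact Finset.mem_coe.mpr (Y.up_left_mem (by omega) (by omega) h1)
        · have hb' : x2 < b := by omega
          rcases h2 with h2 | h2
          · omega
          · exact Finset.mem_coe.mpr (Y.up_left_mem (by omega) (by omega) h2)
    · exact Set.mem_insert_iff.mpr (Or.inr (Y.isLowerSet hxy hy))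

lemma removable_iff {Y : YoungDiagram} {q : ℕ × ℕ} :
    Removable Y q ↔ q ∈ Y ∧ (q.1 + 1, q.2) ∉ Y ∧ (q.1, q.2 + 1) ∉ Y := by
  obtain ⟨a, b⟩ := q
  constructor
  · rintro ⟨hq, hls⟩
    refine ⟨hq, fun hc => ?_, fun hc => ?_⟩
    · have hm : ((a, b) : ℕ × ℕ) ∈ (Y.cells : Set (ℕ × ℕ)) \ {(a,b)} :=
        hls (show ((a,b) : ℕ × ℕ) ≤ (a+1, b) from pair_le.mpr ⟨Nat.le_succ a, le_refl b⟩)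
          ⟨by simpa using hc, by rw [Set.mem_singleton_iff, Prod.mk.injEq]; omega⟩
      exact hm.2 rfl
    · have hm : ((a, b) : ℕ × ℕ) ∈ (Y.cells : Set (ℕ × ℕ)) \ {(a,b)} :=
        hls (show ((a,b) : ℕ × ℕ) ≤ (a, b+1) from pair_le.mpr ⟨le_refl a, Nat.le_succ b⟩)
          ⟨by simpa using hc, by rw [Set.mem_singleton_iff, Prod.mk.injEq]; omega⟩
      exact hm.2 rfl
  · rintro ⟨hq, h1, h2⟩
    refine ⟨hq, ?_⟩
    rintro ⟨y1, y2⟩ ⟨x1, x2⟩ hxy hy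
    rw [pair_le] at hxy
    have hy1 : ((y1, y2) : ℕ × ℕ) ∈ Y := by simpa using hy.1
    refine ⟨by simpa using Y.isLowerSet (pair_le.mpr hxy) hy1, ?_⟩
    rw [Set.mem_singleton_iff, Prod.mk.injEq]
    rintro ⟨rfl, rfl⟩
    have hyq : ¬(y1 = x1 ∧ y2 = x2) := by
      intro h; exact hy.2 (by rw [Set.mem_singleton_iff, Prod.mk.injEq]; omega)
    by_cases h1' : x1 < y1
    · exact h1 (Y.up_left_mem (by omega) (by omega : x2 ≤ y2) hy1)
    · exact h2 (Y.up_left_mem (by omega : x1 ≤ y1) (by omega) hy1)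

lemma addBox_cells {Y : YoungDiagram} {q : ℕ × ℕ} (h : Addable Y q) :
    (addBox Y q).cells = insert q Y.cells := by
  rw [addBox, dif_pos h.2]

lemma removeBox_cells {Y : YoungDiagram} {q : ℕ × ℕ} (h : Removable Y q) :
    (removeBox Y q).cells = Y.cells.erase q := by
  have : IsLowerSet ((Y.cells.erase q : Finset (ℕ × ℕ)) : Set (ℕ × ℕ)) := by
    rw [Finset.coe_erase]; exact h.2
  rw [removeBox, dif_pos this]

lemma mem_addBox {Y : YoungDiagram} {q : ℕ × ℕ} (h : Addable Y q) (p : ℕ × ℕ) :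
    p ∈ addBox Y q ↔ p = q ∨ p ∈ Y := by
  rw [← YoungDiagram.mem_cells, addBox_cells h, Finset.mem_insert, YoungDiagram.mem_cells]

lemma mem_removeBox {Y : YoungDiagram} {q : ℕ × ℕ} (h : Removable Y q) (p : ℕ × ℕ) :
    p ∈ removeBox Y q ↔ p ≠ q ∧ p ∈ Y := by
  rw [← YoungDiagram.mem_cells, removeBox_cells h, Finset.mem_erase, YoungDiagram.mem_cells]

lemma removable_removeBox_iff {Y : YoungDiagram} {q : ℕ × ℕ} (hq : Removable Y q) (p : ℕ × ℕ) :
    Removable (removeBox Y q) p ↔ p ≠ q ∧ p ∈ Y ∧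
      ((p.1 + 1, p.2) ∉ Y ∨ (p.1 + 1, p.2) = q) ∧ ((p.1, p.2 + 1) ∉ Y ∨ (p.1, p.2 + 1) = q) := by
  rw [removable_iff]
  simp only [mem_removeBox hq]
  tauto

lemma removable_addBox_iff {Y : YoungDiagram} {q : ℕ × ℕ} (hq : Addable Y q) (p : ℕ × ℕ) :
    Removable (addBox Y q) p ↔ p = q ∨ (Removable Y p ∧ (p.1 + 1, p.2) ≠ q ∧ (p.1, p.2 + 1) ≠ q) := by
  obtain ⟨a, b⟩ := q
  obtain ⟨c, d⟩ := p
  rw [removable_iff, removable_iff]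
  simp only [mem_addBox hq, ne_eq, Prod.mk.injEq]
  by_cases hpq : c = a ∧ d = b
  · obtain ⟨rfl, rfl⟩ := hpq
    have h1 : ((c + 1, d) : ℕ × ℕ) ∉ Y := fun hc => hq.1 (Y.up_left_mem (by omega) (le_refl _) hc)
    have h2 : ((c, d + 1) : ℕ × ℕ) ∉ Y := fun hc => hq.1 (Y.up_left_mem (le_refl _) (by omega) hc)
    constructor
    · intro _; exact Or.inl ⟨rfl, rfl⟩
    · intro _
      refine ⟨Or.inl ⟨rfl, rfl⟩, ?_, ?_⟩ <;> rintro (⟨h, h'⟩ | h) <;> first | omega | exact h1 h | exact h2 h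
  · constructor
    · rintro ⟨hm, h1, h2⟩
      push_neg at h1 h2
      refine Or.inr ⟨⟨?_, h1.2, h2.2⟩, ?_, ?_⟩
      · rcases hm with h | h
        · exact absurd h hpq
        · exact h
      · rintro ⟨h, h'⟩; exact h1.1 h h'
      · rintro ⟨h, h'⟩; exact h2.1 h h'
    · rintro (h | ⟨⟨hm, h1, h2⟩, hd, hr⟩)
      · exact absurd h hpq
      · refine ⟨Or.inr hm, ?_, ?_⟩
        · rintro (h | h); · exact hd h
          · exact h1 h
        · rintro (h | h); · exact hr h
          · exact h2 h

lemma addable_removeBox_iff {Y : YoungDiagram} {q : ℕ × ℕ} (hq : Removable Y q) (p : ℕ × ℕ) :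
    Addable (removeBox Y q) p ↔ p = q ∨ (Addable Y p ∧ p ≠ (q.1, q.2 + 1) ∧ p ≠ (q.1 + 1, q.2)) := by
  obtain ⟨a, b⟩ := q
  obtain ⟨c, d⟩ := p
  rw [addable_iff, addable_iff]
  simp only [mem_removeBox hq, ne_eq, Prod.mk.injEq]
  by_cases hpq : c = a ∧ d = b
  · obtain ⟨rfl, rfl⟩ := hpq
    constructor
    · intro _; exact Or.inl ⟨rfl, rfl⟩
    · intro _
      refine ⟨?_, ?_, ?_⟩
      · rintro ⟨h, _⟩; exact h ⟨rfl, rfl⟩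
      · rcases Nat.eq_zero_or_pos c with h | h
        · exact Or.inl h
        · exact Or.inr ⟨by rintro ⟨h1, h2⟩; omega, Y.up_left_mem (by omega) (le_refl _) hq.1⟩
      · rcases Nat.eq_zero_or_pos d with h | h
        · exact Or.inl h
        · exact Or.inr ⟨by rintro ⟨h1, h2⟩; omega, Y.up_left_mem (le_refl _) (by omega) hq.1⟩
  · constructor
    · rintro ⟨hm, h1, h2⟩
      have hny : ((c, d) : ℕ × ℕ) ∉ Y := by
        intro hc; exact hm ⟨fun hh => hpq hh, hc⟩
      refine Or.inr ⟨⟨hny, ?_, ?_⟩, ?_, ?_⟩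
      · rcases h1 with h | h
        · exact Or.inl h
        · exact Or.inr h.2
      · rcases h2 with h | h
        · exact Or.inl h
        · exact Or.inr h.2
      · rintro ⟨rfl, rfl⟩
        rcases h2 with h | h; · omega
        · exact h.1 ⟨rfl, by omega⟩
      · rintro ⟨rfl, rfl⟩
        rcases h1 with h | h; · omega
        · exact h.1 ⟨by omega, rfl⟩
    · rintro (h | ⟨⟨hny, h1, h2⟩, hrt, hdn⟩)
      · exact absurd h hpq
      · refine ⟨fun hh => hny hh.2, ?_, ?_⟩
        · rcases h1 with h | h
          · exact Or.inl h
          · refine Or.inr ⟨?_, h⟩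
            rintro ⟨h1', h2'⟩; exact hdn ⟨by omega, by omega⟩
        · rcases h2 with h | h
          · exact Or.inl h
          · refine Or.inr ⟨?_, h⟩
            rintro ⟨h1', h2'⟩; exact hrt ⟨by omega, by omega⟩

lemma addable_addBox_iff {Y : YoungDiagram} {q : ℕ × ℕ} (hq : Addable Y q) (p : ℕ × ℕ) :
    Addable (addBox Y q) p ↔ p ≠ q ∧ p ∉ Y ∧
      (p.1 = 0 ∨ (p.1 - 1, p.2) ∈ Y ∨ (p.1 - 1, p.2) = q) ∧
      (p.2 = 0 ∨ (p.1, p.2 - 1) ∈ Y ∨ (p.1, p.2 - 1) = q) := by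
  rw [addable_iff]
  simp only [mem_addBox hq]
  tauto

lemma yd_ext {Y Z : YoungDiagram} (h : Y.cells = Z.cells) : Y = Z := by
  cases Y; cases Z; simpa using h

lemma rem_preserve {Y : YoungDiagram} {p q : ℕ × ℕ} (hq : Removable Y q) (hp : Removable Y p)
    (hne : p ≠ q) : Removable (removeBox Y q) p := by
  rw [removable_iff] at hp
  exact (removable_removeBox_iff hq p).mpr ⟨hne, hp.1, Or.inl hp.2.1, Or.inl hp.2.2⟩

lemma add_preserve {Y : YoungDiagram} {p q : ℕ × ℕ} (hq : Addable Y q) (hp : Addable Y p)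
    (hne : p ≠ q) : Addable (addBox Y q) p := by
  rw [addable_iff] at hp
  refine (addable_addBox_iff hq p).mpr ⟨hne, hp.1, ?_, ?_⟩
  · rcases hp.2.1 with h | h
    · exact Or.inl h
    · exact Or.inr (Or.inl h)
  · rcases hp.2.2 with h | h
    · exact Or.inl h
    · exact Or.inr (Or.inl h)

lemma rem_strip {Y : YoungDiagram} {p q : ℕ × ℕ} (hq : Removable Y q)
    (h : Removable (removeBox Y q) p) (h1 : (p.1 + 1, p.2) ≠ q) (h2 : (p.1, p.2 + 1) ≠ q) :
    Removable Y p := by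
  rw [removable_removeBox_iff hq] at h
  rw [removable_iff]
  obtain ⟨-, hm, ha, hb⟩ := h
  exact ⟨hm, ha.resolve_right h1, hb.resolve_right h2⟩

lemma add_strip {Y : YoungDiagram} {p q : ℕ × ℕ} (hq : Addable Y q)
    (h : Addable (addBox Y q) p) (h1 : (p.1 - 1, p.2) ≠ q) (h2 : (p.1, p.2 - 1) ≠ q) :
    Addable Y p := by
  rw [addable_addBox_iff hq] at h
  rw [addable_iff]
  obtain ⟨-, hm, ha, hb⟩ := h
  refine ⟨hm, ?_, ?_⟩
  · rcases ha with h | h | h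
    · exact Or.inl h
    · exact Or.inr h
    · exact absurd h h1
  · rcases hb with h | h | h
    · exact Or.inl h
    · exact Or.inr h
    · exact absurd h h2

lemma removeBox_addBox_cancel {Y : YoungDiagram} {q : ℕ × ℕ} (hq : Addable Y q) :
    removeBox (addBox Y q) q = Y := by
  have hrem : Removable (addBox Y q) q := (removable_addBox_iff hq q).mpr (Or.inl rfl)
  apply yd_ext
  rw [removeBox_cells hrem, addBox_cells hq,
    Finset.erase_insert (by simpa using hq.1)]

lemma addBox_removeBox_cancel {Y : YoungDiagram} {q : ℕ × ℕ} (hq : Removable Y q) :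
    addBox (removeBox Y q) q = Y := by
  have hadd : Addable (removeBox Y q) q := (addable_removeBox_iff hq q).mpr (Or.inl rfl)
  apply yd_ext
  rw [addBox_cells hadd, removeBox_cells hq,
    Finset.insert_erase (by simpa using hq.1)]

/-- The residue of a cell. -/
def resid (n : ℤ) (l : ℕ) (p : ℕ × ℕ) : ZMod l := ((n + (p.2 : ℤ) - (p.1 : ℤ) : ℤ) : ZMod l)

lemma resid_rt (n : ℤ) (l : ℕ) (a b : ℕ) : resid n l (a, b + 1) = resid n l (a, b) + 1 := by
  unfold resid; push_cast; ring

lemma resid_dn (n : ℤ) (l : ℕ) (a b : ℕ) : resid n l (a + 1, b) = resid n l (a, b) - 1 := by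
  unfold resid; push_cast; ring

lemma zmod_one_ne_zero {l : ℕ} (hl : 3 ≤ l) : (1 : ZMod l) ≠ 0 := by
  have : ((1 : ℤ) : ZMod l) ≠ 0 := by
    rw [Ne, ZMod.intCast_zmod_eq_zero_iff_dvd]
    intro h
    have := Int.le_of_dvd (by norm_num) h
    omega
  simpa using this

lemma zmod_two_ne_zero {l : ℕ} (hl : 3 ≤ l) : (2 : ZMod l) ≠ 0 := by
  have : ((2 : ℤ) : ZMod l) ≠ 0 := by
    rw [Ne, ZMod.intCast_zmod_eq_zero_iff_dvd]
    intro h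
    have := Int.le_of_dvd (by norm_num) h
    omega
  simpa using this

lemma rt_ne {n : ℤ} {l : ℕ} {p q : ℕ × ℕ} (h : resid n l q ≠ resid n l p + 1) :
    (p.1, p.2 + 1) ≠ q := by
  rintro rfl
  rw [show ((p.1, p.2 + 1) : ℕ × ℕ) = (p.1, p.2 + 1) from rfl, resid_rt] at h
  exact h (by rw [show p = (p.1, p.2) from rfl])

lemma dn_ne {n : ℤ} {l : ℕ} {p q : ℕ × ℕ} (h : resid n l q ≠ resid n l p - 1) :
    (p.1 + 1, p.2) ≠ q := by
  rintro rfl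
  rw [resid_dn] at h
  exact h (by rw [show p = (p.1, p.2) from rfl])

lemma up_ne {n : ℤ} {l : ℕ} {p q : ℕ × ℕ} (hne : q ≠ p) (h : resid n l q ≠ resid n l p + 1) :
    (p.1 - 1, p.2) ≠ q := by
  intro he
  rcases Nat.eq_zero_or_pos p.1 with h0 | h0
  · apply hne
    rw [← he, h0]
    exact Prod.ext (by simp [h0]) rfl
  · apply h
    rw [← he]
    unfold resid
    have : ((p.1 - 1 : ℕ) : ℤ) = (p.1 : ℤ) - 1 := by omega
    rw [this]; push_cast; ring_nf

lemma lf_ne {n : ℤ} {l : ℕ} {p q : ℕ × ℕ} (hne : q ≠ p) (h : resid n l q ≠ resid n l p - 1) :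
    (p.1, p.2 - 1) ≠ q := by
  intro he
  rcases Nat.eq_zero_or_pos p.2 with h0 | h0
  · apply hne
    rw [← he, h0]
    exact Prod.ext rfl (by simp [h0])
  · apply h
    rw [← he]
    unfold resid
    have : ((p.2 - 1 : ℕ) : ℤ) = (p.2 : ℤ) - 1 := by omega
    rw [this]; push_cast; ring_nf

lemma resid_dvd_of_eq {n : ℤ} {l : ℕ} {p q : ℕ × ℕ} (h : resid n l p = resid n l q) :
    (l : ℤ) ∣ ((p.2 : ℤ) - p.1 - ((q.2 : ℤ) - q.1)) := by
  unfold resid at h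
  have h1 := (ZMod.intCast_eq_intCast_iff' _ _ _).mp h
  have h2 := Int.ModEq.dvd h1
  have h3 : (l : ℤ) ∣ -(n + (q.2:ℤ) - q.1 - (n + (p.2:ℤ) - p.1)) := dvd_neg.mpr h2
  convert h3 using 1
  ring

/-- Two cells with the same residue are either on the same diagonal or far apart. -/
lemma far_of_resid_eq {n : ℤ} {l : ℕ} (hl : 3 ≤ l) {p q : ℕ × ℕ}
    (h : resid n l p = resid n l q) (hct : ((p.2 : ℤ) - p.1) ≠ ((q.2 : ℤ) - q.1)) :
    3 ≤ |((p.2 : ℤ) - p.1) - ((q.2 : ℤ) - q.1)| := by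
  have hd := resid_dvd_of_eq h
  have hne : ((p.2 : ℤ) - p.1 - ((q.2 : ℤ) - q.1)) ≠ 0 := by
    intro h0; exact hct (by omega)
  have h4 := Int.le_of_dvd (abs_pos.mpr hne) ((dvd_abs _ _).mpr hd)
  have h5 : (3 : ℤ) ≤ (l : ℤ) := by exact_mod_cast hl
  exact le_trans h5 h4

/-- Same-diagonal workhorse: if `x` is removable and `y ∈ Y` lies on the same diagonal,
`y ≠ x`, then the right and down neighbours of `y` are in `Y` and differ from `x`. -/
lemma lemU {Y : YoungDiagram} {x y : ℕ × ℕ} (hx : Removable Y x) (hy : y ∈ Y) (hne : y ≠ x)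
    (hc : (y.2 : ℤ) - y.1 = (x.2 : ℤ) - x.1) :
    (y.1, y.2 + 1) ∈ Y ∧ (y.1 + 1, y.2) ∈ Y ∧ (y.1, y.2 + 1) ≠ x ∧ (y.1 + 1, y.2) ≠ x := by
  obtain ⟨a, b⟩ := x
  obtain ⟨c, d⟩ := y
  rw [removable_iff] at hx
  simp only at hc ⊢
  have hcd : ¬(c = a ∧ d = b) := by
    intro h; exact hne (Prod.ext (by simp [h.1]) (by simp [h.2]))
  have hlt : c < a ∧ d < b := by
    by_contra hcon
    have h1 : a < c ∧ b < d := by omega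
    exact hx.2.2 (Y.up_left_mem (by omega) (by omega) hy)
  refine ⟨Y.up_left_mem (by omega) (by omega) hx.1, Y.up_left_mem (by omega) (by omega) hx.1,
    ?_, ?_⟩
  · intro h; rw [Prod.mk.injEq] at h; omega
  · intro h; rw [Prod.mk.injEq] at h; omega

/-- Dual workhorse for addable cells on the same diagonal. -/
lemma lemUA {Y : YoungDiagram} {x y : ℕ × ℕ} (hx : Addable Y x) (hy : y ∉ Y) (hne : y ≠ x)
    (hc : (y.2 : ℤ) - y.1 = (x.2 : ℤ) - x.1) :
    y.1 ≠ 0 ∧ y.2 ≠ 0 ∧ (y.1 - 1, y.2) ∉ Y ∧ (y.1, y.2 - 1) ∉ Y ∧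
      (y.1 - 1, y.2) ≠ x ∧ (y.1, y.2 - 1) ≠ x := by
  obtain ⟨a, b⟩ := x
  obtain ⟨c, d⟩ := y
  rw [addable_iff] at hx
  simp only at hc ⊢
  have hcd : ¬(c = a ∧ d = b) := by
    intro h; exact hne (Prod.ext (by simp [h.1]) (by simp [h.2]))
  have hlt : a < c ∧ b < d := by
    by_contra hcon
    have h1 : c < a ∧ d < b := by omega
    rcases hx.2.1 with h | h
    · omega
    · exact hy (Y.up_left_mem (by omega) (by omega) h)
  refine ⟨by omega, by omega, ?_, ?_, ?_, ?_⟩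
  · intro h; exact hx.1 (Y.up_left_mem (by omega) (by omega) h)
  · intro h; exact hx.1 (Y.up_left_mem (by omega) (by omega) h)
  · intro h; rw [Prod.mk.injEq] at h; omega
  · intro h; rw [Prod.mk.injEq] at h; omega

lemma addable_set_finite (Y : YoungDiagram) : {p : ℕ × ℕ | Addable Y p}.Finite := by
  apply Set.Finite.subset (Set.finite_coe_iff.mp ?_ :
    (↑(insert ((0,0) : ℕ × ℕ) (Y.cells.image (fun p => (p.1 + 1, p.2)) ∪
      Y.cells.image (fun p => (p.1, p.2 + 1)))) : Set (ℕ × ℕ)).Finite)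
  · intro p hp
    rw [Set.mem_setOf_eq, addable_iff] at hp
    simp only [Finset.coe_insert, Finset.coe_union, Finset.coe_image, Set.mem_insert_iff,
      Set.mem_union, Set.mem_image, Finset.mem_coe]
    obtain ⟨a, b⟩ := p
    rcases Nat.eq_zero_or_pos a with ha | ha
    · rcases Nat.eq_zero_or_pos b with hb | hb
      · left; rw [Prod.mk.injEq]; exact ⟨ha, hb⟩
      · have h' : ((a, b - 1) : ℕ × ℕ) ∈ Y := by
          rcases hp.2.2 with h' | h'; · omega
          · exact h'
        right; right
        exact ⟨(a, b - 1), YoungDiagram.mem_cells _ |>.mpr h',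
          by simp only; rw [Prod.mk.injEq]; constructor <;> omega⟩
    · have h : ((a - 1, b) : ℕ × ℕ) ∈ Y := by
        rcases hp.2.1 with h | h; · omega
        · exact h
      right; left
      exact ⟨(a - 1, b), YoungDiagram.mem_cells _ |>.mpr h,
        by simp only; rw [Prod.mk.injEq]; constructor <;> omega⟩
  · exact Set.finite_coe_iff.mpr (Finset.finite_toSet _)

lemma ASet_finite (n : ℤ) (l : ℕ) (i : ZMod l) (Y : YoungDiagram) :
    {p : ℕ × ℕ | Addable Y p ∧ resid n l p = i}.Finite :=
  (addable_set_finite Y).subset (fun _ h => h.1)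

lemma RSet_finite (n : ℤ) (l : ℕ) (i : ZMod l) (Y : YoungDiagram) :
    {p : ℕ × ℕ | Removable Y p ∧ resid n l p = i}.Finite :=
  Set.Finite.subset (Finset.finite_toSet Y.cells) (fun p h => Finset.mem_coe.mpr h.1.1)

noncomputable def AF (n : ℤ) (l : ℕ) (i : ZMod l) (Y : YoungDiagram) : Finset (ℕ × ℕ) :=
  (ASet_finite n l i Y).toFinset

noncomputable def RF (n : ℤ) (l : ℕ) (i : ZMod l) (Y : YoungDiagram) : Finset (ℕ × ℕ) :=
  (RSet_finite n l i Y).toFinset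

lemma mem_AF {n : ℤ} {l : ℕ} {i : ZMod l} {Y : YoungDiagram} {p : ℕ × ℕ} :
    p ∈ AF n l i Y ↔ Addable Y p ∧ resid n l p = i := by
  rw [AF, Set.Finite.mem_toFinset, Set.mem_setOf_eq]

lemma mem_RF {n : ℤ} {l : ℕ} {i : ZMod l} {Y : YoungDiagram} {p : ℕ × ℕ} :
    p ∈ RF n l i Y ↔ Removable Y p ∧ resid n l p = i := by
  rw [RF, Set.Finite.mem_toFinset, Set.mem_setOf_eq]

lemma end_ext {φ ψ : Module.End ℤ FockV}
    (h : ∀ Y : YoungDiagram, φ (Finsupp.single Y 1) = ψ (Finsupp.single Y 1)) : φ = ψ := by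
  refine Finsupp.lhom_ext fun Y b => ?_
  have hb : Finsupp.single Y b = b • Finsupp.single Y (1 : ℤ) := by
    rw [Finsupp.smul_single, smul_eq_mul, mul_one]
  rw [hb, map_smul, map_smul, h]

lemma fRes_single (n : ℤ) (l : ℕ) (i : ZMod l) (Y : YoungDiagram) :
    fRes n l i (Finsupp.single Y 1) =
      -(∑ p ∈ AF n l i Y, Finsupp.single (addBox Y p) (1 : ℤ)) := by
  unfold fRes
  rw [Finsupp.lift_apply, Finsupp.sum_single_index (by rw [zero_smul]), one_smul]
  congr 1
  have hset : {p : ℕ × ℕ | Addable Y p ∧ ((n + (p.2 : ℤ) - (p.1 : ℤ) : ℤ) : ZMod l) = i}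
      = (↑(AF n l i Y) : Set (ℕ × ℕ)) := by
    rw [AF, Set.Finite.coe_toFinset]
    rfl
  rw [hset, finsum_mem_coe_finset]

lemma eRes_single (n : ℤ) (l : ℕ) (i : ZMod l) (Y : YoungDiagram) :
    eRes n l i (Finsupp.single Y 1) =
      -(∑ p ∈ RF n l i Y, Finsupp.single (removeBox Y p) (1 : ℤ)) := by
  unfold eRes
  rw [Finsupp.lift_apply, Finsupp.sum_single_index (by rw [zero_smul]), one_smul]
  congr 1
  have hset : {p : ℕ × ℕ | Removable Y p ∧ ((n + (p.2 : ℤ) - (p.1 : ℤ) : ℤ) : ZMod l) = i}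
      = (↑(RF n l i Y) : Set (ℕ × ℕ)) := by
    rw [RF, Set.Finite.coe_toFinset]
    rfl
  rw [hset, finsum_mem_coe_finset]

lemma resid_shift (n : ℤ) (l : ℕ) (i : ZMod l) (p : ℕ × ℕ) :
    ((((p.2 : ℤ) - (p.1 : ℤ) : ℤ) : ZMod l) = i - (n : ZMod l)) ↔ resid n l p = i := by
  unfold resid
  push_cast
  constructor <;> intro h <;> linear_combination h

lemma hRes_single (n : ℤ) (l : ℕ) (i : ZMod l) (Y : YoungDiagram) :
    hRes n l i (Finsupp.single Y 1) =
      (((AF n l i Y).card : ℤ) - ((RF n l i Y).card : ℤ)) • Finsupp.single Y (1 : ℤ) := by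
  unfold hRes
  rw [Finsupp.lift_apply, Finsupp.sum_single_index (by rw [zero_smul]), one_smul]
  have hA : {p : ℕ × ℕ | Addable Y p ∧ (((p.2 : ℤ) - (p.1 : ℤ) : ℤ) : ZMod l) = i - (n : ZMod l)}
      = (↑(AF n l i Y) : Set (ℕ × ℕ)) := by
    rw [AF, Set.Finite.coe_toFinset]
    ext p
    simp only [Set.mem_setOf_eq, and_congr_right_iff]
    intro _
    exact resid_shift n l i p
  have hR : {p : ℕ × ℕ | Removable Y p ∧ (((p.2 : ℤ) - (p.1 : ℤ) : ℤ) : ZMod l) = i - (n : ZMod l)}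
      = (↑(RF n l i Y) : Set (ℕ × ℕ)) := by
    rw [RF, Set.Finite.coe_toFinset]
    ext p
    simp only [Set.mem_setOf_eq, and_congr_right_iff]
    intro _
    exact resid_shift n l i p
  rw [hA, hR, Set.ncard_coe_finset, Set.ncard_coe_finset]

lemma swap_mixed_mem1 {n : ℤ} {l : ℕ} {i j : ZMod l} {Y : YoungDiagram} {p q : ℕ × ℕ}
    (hp : p ∈ AF n l j Y) (hq : q ∈ RF n l i (addBox Y p)) (hne : q ≠ p) :
    q ∈ RF n l i Y ∧ p ∈ AF n l j (removeBox Y q) := by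
  rw [mem_AF] at hp
  rw [mem_RF] at hq
  have hrem : Removable Y q ∧ (q.1 + 1, q.2) ≠ p ∧ (q.1, q.2 + 1) ≠ p :=
    ((removable_addBox_iff hp.1 q).mp hq.1).resolve_left hne
  refine ⟨mem_RF.mpr ⟨hrem.1, hq.2⟩, mem_AF.mpr ⟨?_, hp.2⟩⟩
  exact (addable_removeBox_iff hrem.1 p).mpr
    (Or.inr ⟨hp.1, fun h => hrem.2.2 h.symm, fun h => hrem.2.1 h.symm⟩)

lemma swap_mixed_mem2 {n : ℤ} {l : ℕ} {i j : ZMod l} {Y : YoungDiagram} {p q : ℕ × ℕ}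
    (hq : q ∈ RF n l i Y) (hp : p ∈ AF n l j (removeBox Y q)) (hne : p ≠ q) :
    p ∈ AF n l j Y ∧ q ∈ RF n l i (addBox Y p) := by
  rw [mem_RF] at hq
  rw [mem_AF] at hp
  have hadd : Addable Y p ∧ p ≠ (q.1, q.2 + 1) ∧ p ≠ (q.1 + 1, q.2) :=
    ((addable_removeBox_iff hq.1 p).mp hp.1).resolve_left hne
  refine ⟨mem_AF.mpr ⟨hadd.1, hp.2⟩, mem_RF.mpr ⟨?_, hq.2⟩⟩
  exact (removable_addBox_iff hadd.1 q).mpr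
    (Or.inr ⟨hq.1, fun h => hadd.2.2 h.symm, fun h => hadd.2.1 h.symm⟩)

lemma swap_mixed_val {Y : YoungDiagram} {p q : ℕ × ℕ}
    (hp : Addable Y p) (hq : Removable (addBox Y p) q)
    (hq' : Removable Y q) (hp' : Addable (removeBox Y q) p) (hne : q ≠ p) :
    removeBox (addBox Y p) q = addBox (removeBox Y q) p := by
  apply yd_ext
  rw [removeBox_cells hq, addBox_cells hp, addBox_cells hp', removeBox_cells hq']
  ext x
  simp only [Finset.mem_erase, Finset.mem_insert]
  constructor
  · rintro ⟨hxq, hx | hx⟩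
    · exact Or.inl hx
    · exact Or.inr ⟨hxq, hx⟩
  · rintro (hx | ⟨hxq, hx⟩)
    · exact ⟨by rw [hx]; exact fun h => hne h.symm, Or.inl hx⟩
    · exact ⟨hxq, Or.inr hx⟩

lemma rel1 (n : ℤ) (l : ℕ) (hl : 3 ≤ l) (i j : ZMod l) :
    eRes n l i * fRes n l j - fRes n l j * eRes n l i
      = if i = j then hRes n l i else 0 := by
  apply end_ext
  intro Y
  simp only [LinearMap.sub_apply, Module.End.mul_apply]
  have h1 : eRes n l i (fRes n l j (Finsupp.single Y 1)) =
      ∑ x ∈ (AF n l j Y).sigma (fun p => RF n l i (addBox Y p)),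
        Finsupp.single (removeBox (addBox Y x.1) x.2) (1 : ℤ) := by
    rw [fRes_single, map_neg, map_sum]
    simp only [eRes_single]
    rw [Finset.sum_neg_distrib, neg_neg]
    exact Finset.sum_sigma' _ _ _
  have h2 : fRes n l j (eRes n l i (Finsupp.single Y 1)) =
      ∑ x ∈ (RF n l i Y).sigma (fun q => AF n l j (removeBox Y q)),
        Finsupp.single (addBox (removeBox Y x.1) x.2) (1 : ℤ) := by
    rw [eRes_single, map_neg, map_sum]
    simp only [fRes_single]
    rw [Finset.sum_neg_distrib, neg_neg]
    exact Finset.sum_sigma' _ _ _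
  rw [h1, h2]
  rw [← Finset.sum_filter_add_sum_filter_not
    ((AF n l j Y).sigma (fun p => RF n l i (addBox Y p))) (fun x => x.2 = x.1)]
  rw [← Finset.sum_filter_add_sum_filter_not
    ((RF n l i Y).sigma (fun q => AF n l j (removeBox Y q))) (fun x => x.2 = x.1)]
  -- the off-diagonal sums agree
  have hoff : ∑ x ∈ ((AF n l j Y).sigma (fun p => RF n l i (addBox Y p))).filter
        (fun x => ¬ x.2 = x.1), Finsupp.single (removeBox (addBox Y x.1) x.2) (1 : ℤ)
      = ∑ x ∈ ((RF n l i Y).sigma (fun q => AF n l j (removeBox Y q))).filter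
        (fun x => ¬ x.2 = x.1), Finsupp.single (addBox (removeBox Y x.1) x.2) (1 : ℤ) := by
    refine Finset.sum_bij' (fun x _ => ⟨x.2, x.1⟩) (fun x _ => ⟨x.2, x.1⟩) ?_ ?_ ?_ ?_ ?_
    · rintro ⟨p, q⟩ hx
      rw [Finset.mem_filter, Finset.mem_sigma] at hx
      obtain ⟨⟨hp, hq⟩, hne⟩ := hx
      have := swap_mixed_mem1 hp hq hne
      rw [Finset.mem_filter, Finset.mem_sigma]
      exact ⟨⟨this.1, this.2⟩, fun h => hne (by simpa using h.symm)⟩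
    · rintro ⟨q, p⟩ hx
      rw [Finset.mem_filter, Finset.mem_sigma] at hx
      obtain ⟨⟨hq, hp⟩, hne⟩ := hx
      have := swap_mixed_mem2 hq hp hne
      rw [Finset.mem_filter, Finset.mem_sigma]
      exact ⟨⟨this.1, this.2⟩, fun h => hne (by simpa using h.symm)⟩
    · rintro ⟨p, q⟩ _; rfl
    · rintro ⟨q, p⟩ _; rfl
    · rintro ⟨p, q⟩ hx
      rw [Finset.mem_filter, Finset.mem_sigma] at hx
      obtain ⟨⟨hp, hq⟩, hne⟩ := hx
      have hs := swap_mixed_mem1 hp hq hne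
      congr 1
      exact swap_mixed_val (mem_AF.mp hp).1 (mem_RF.mp hq).1
        (mem_RF.mp hs.1).1 (mem_AF.mp hs.2).1 hne
  rw [hoff]
  -- the diagonal sums
  have hd1 : ∑ x ∈ ((AF n l j Y).sigma (fun p => RF n l i (addBox Y p))).filter
        (fun x => x.2 = x.1), Finsupp.single (removeBox (addBox Y x.1) x.2) (1 : ℤ)
      = (if i = j then ((AF n l i Y).card : ℤ) else 0) • Finsupp.single Y (1 : ℤ) := by
    by_cases hij : i = j
    · subst hij
      rw [if_pos rfl]
      rw [Finset.sum_congr rfl (g := fun _ => Finsupp.single Y (1 : ℤ)) ?_]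
      · rw [Finset.sum_const]
        rw [show (((AF n l i Y).sigma (fun p => RF n l i (addBox Y p))).filter
            (fun x => x.2 = x.1)).card = (AF n l i Y).card from ?_]
        · rw [← Nat.cast_smul_eq_nsmul ℤ]
        · refine Finset.card_bij' (fun x _ => x.1) (fun p _ => ⟨p, p⟩) ?_ ?_ ?_ ?_
          · rintro ⟨p, q⟩ hx
            rw [Finset.mem_filter, Finset.mem_sigma] at hx
            exact hx.1.1
          · intro p hp
            rw [Finset.mem_filter, Finset.mem_sigma]
            refine ⟨⟨hp, mem_RF.mpr ⟨?_, (mem_AF.mp hp).2⟩⟩, rfl⟩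
            exact (removable_addBox_iff (mem_AF.mp hp).1 p).mpr (Or.inl rfl)
          · rintro ⟨p, q⟩ hx
            rw [Finset.mem_filter] at hx
            obtain ⟨-, hne⟩ := hx
            simp only at hne
            subst hne
            rfl
          · intro p _; rfl
      · rintro ⟨p, q⟩ hx
        rw [Finset.mem_filter, Finset.mem_sigma] at hx
        obtain ⟨⟨hp, -⟩, hne⟩ := hx
        simp only at hne
        subst hne
        rw [removeBox_addBox_cancel (mem_AF.mp hp).1]
    · rw [if_neg hij, zero_smul]
      rw [Finset.sum_eq_zero]
      rintro ⟨p, q⟩ hx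
      rw [Finset.mem_filter, Finset.mem_sigma] at hx
      obtain ⟨⟨hp, hq⟩, hne⟩ := hx
      simp only at hne
      subst hne
      exact absurd ((mem_RF.mp hq).2.symm.trans (mem_AF.mp hp).2) hij
  have hd2 : ∑ x ∈ ((RF n l i Y).sigma (fun q => AF n l j (removeBox Y q))).filter
        (fun x => x.2 = x.1), Finsupp.single (addBox (removeBox Y x.1) x.2) (1 : ℤ)
      = (if i = j then ((RF n l i Y).card : ℤ) else 0) • Finsupp.single Y (1 : ℤ) := by
    by_cases hij : i = j
    · subst hij
      rw [if_pos rfl]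
      rw [Finset.sum_congr rfl (g := fun _ => Finsupp.single Y (1 : ℤ)) ?_]
      · rw [Finset.sum_const]
        rw [show (((RF n l i Y).sigma (fun q => AF n l i (removeBox Y q))).filter
            (fun x => x.2 = x.1)).card = (RF n l i Y).card from ?_]
        · rw [← Nat.cast_smul_eq_nsmul ℤ]
        · refine Finset.card_bij' (fun x _ => x.1) (fun q _ => ⟨q, q⟩) ?_ ?_ ?_ ?_
          · rintro ⟨q, p⟩ hx
            rw [Finset.mem_filter, Finset.mem_sigma] at hx
            exact hx.1.1
          · intro q hq
            rw [Finset.mem_filter, Finset.mem_sigma]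
            refine ⟨⟨hq, mem_AF.mpr ⟨?_, (mem_RF.mp hq).2⟩⟩, rfl⟩
            exact (addable_removeBox_iff (mem_RF.mp hq).1 q).mpr (Or.inl rfl)
          · rintro ⟨q, p⟩ hx
            rw [Finset.mem_filter] at hx
            obtain ⟨-, hne⟩ := hx
            simp only at hne
            subst hne
            rfl
          · intro q _; rfl
      · rintro ⟨q, p⟩ hx
        rw [Finset.mem_filter, Finset.mem_sigma] at hx
        obtain ⟨⟨hq, -⟩, hne⟩ := hx
        simp only at hne
        subst hne
        rw [addBox_removeBox_cancel (mem_RF.mp hq).1]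
    · rw [if_neg hij, zero_smul]
      rw [Finset.sum_eq_zero]
      rintro ⟨q, p⟩ hx
      rw [Finset.mem_filter, Finset.mem_sigma] at hx
      obtain ⟨⟨hq, hp⟩, hne⟩ := hx
      simp only at hne
      subst hne
      exact absurd ((mem_RF.mp hq).2.symm.trans (mem_AF.mp hp).2) hij
  rw [hd1, hd2]
  by_cases hij : i = j
  · subst hij
    rw [if_pos rfl, if_pos rfl, if_pos rfl, hRes_single]
    rw [sub_smul]
    abel
  · rw [if_neg hij, if_neg hij, if_neg hij]
    simp

lemma rel2 (n : ℤ) (l : ℕ) (i j : ZMod l) :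
    hRes n l i * hRes n l j = hRes n l j * hRes n l i := by
  apply end_ext
  intro Y
  simp only [Module.End.mul_apply, hRes_single, map_smul]
  rw [smul_comm]

lemma aCartan_self {l : ℕ} (hl : 3 ≤ l) (t : ZMod l) : aCartanMod l t t = 2 := by
  have h1 : (1 : ZMod l) ≠ 0 := zmod_one_ne_zero hl
  unfold aCartanMod
  rw [if_pos rfl, if_neg (fun h => h1 (by linear_combination -h)),
    if_neg (fun h => h1 (by linear_combination h))]
  ring

lemma aCartan_plus {l : ℕ} (hl : 3 ≤ l) (t : ZMod l) : aCartanMod l (t + 1) t = -1 := by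
  have h1 : (1 : ZMod l) ≠ 0 := zmod_one_ne_zero hl
  have h2 : (2 : ZMod l) ≠ 0 := zmod_two_ne_zero hl
  unfold aCartanMod
  rw [if_neg (fun h => h1 (by linear_combination h)), if_pos rfl,
    if_neg (fun h => h2 (by linear_combination h))]
  ring

lemma aCartan_minus {l : ℕ} (hl : 3 ≤ l) (t : ZMod l) : aCartanMod l (t - 1) t = -1 := by
  have h1 : (1 : ZMod l) ≠ 0 := zmod_one_ne_zero hl
  have h2 : (2 : ZMod l) ≠ 0 := zmod_two_ne_zero hl
  unfold aCartanMod
  rw [if_neg (fun h => h1 (by linear_combination -h)),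
    if_neg (fun h => h2 (by linear_combination -h)), if_pos rfl]
  ring

lemma aCartan_far {l : ℕ} {d t : ZMod l} (ha : d ≠ t) (hb : d ≠ t + 1) (hc : d ≠ t - 1) :
    aCartanMod l d t = 0 := by
  unfold aCartanMod
  rw [if_neg ha, if_neg hb, if_neg hc]
  ring

lemma resid_up (n : ℤ) (l : ℕ) {r : ℕ} (c : ℕ) (hr : r ≠ 0) :
    resid n l (r - 1, c) = resid n l (r, c) + 1 := by
  have h : ((r - 1 : ℕ) : ℤ) = (r : ℤ) - 1 := by omega
  show ((n + (c : ℤ) - ((r - 1 : ℕ) : ℤ) : ℤ) : ZMod l) = ((n + (c : ℤ) - (r : ℤ) : ℤ) : ZMod l) + 1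
  rw [h]; push_cast; ring

lemma resid_lf (n : ℤ) (l : ℕ) (r : ℕ) {c : ℕ} (hc : c ≠ 0) :
    resid n l (r, c - 1) = resid n l (r, c) - 1 := by
  have h : ((c - 1 : ℕ) : ℤ) = (c : ℤ) - 1 := by omega
  show ((n + ((c - 1 : ℕ) : ℤ) - (r : ℤ) : ℤ) : ZMod l) = ((n + (c : ℤ) - (r : ℤ) : ℤ) : ZMod l) - 1
  rw [h]; push_cast; ring

lemma crem (n : ℤ) {l : ℕ} (hl : 3 ≤ l) {Y : YoungDiagram} {q : ℕ × ℕ}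
    (hq : Removable Y q) (d : ZMod l) :
    ((AF n l d (removeBox Y q)).card : ℤ) - ((RF n l d (removeBox Y q)).card : ℤ)
      = ((AF n l d Y).card : ℤ) - ((RF n l d Y).card : ℤ) + aCartanMod l d (resid n l q) := by
  have h1 : (1 : ZMod l) ≠ 0 := zmod_one_ne_zero hl
  have h2 : (2 : ZMod l) ≠ 0 := zmod_two_ne_zero hl
  obtain ⟨r, c⟩ := q
  set t := resid n l (r, c) with ht
  have hqY : ((r, c) : ℕ × ℕ) ∈ Y := hq.1
  have hqdn : ((r + 1, c) : ℕ × ℕ) ∉ Y := (removable_iff.mp hq).2.1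
  have hqrt : ((r, c + 1) : ℕ × ℕ) ∉ Y := (removable_iff.mp hq).2.2
  by_cases hdt : d = t
  · -- d = t : A gains the box itself, R loses it
    have hAF : AF n l d (removeBox Y (r, c)) = insert (r, c) (AF n l d Y) := by
      ext p
      rw [mem_AF, Finset.mem_insert, mem_AF]
      constructor
      · rintro ⟨hadd, hres⟩
        rcases (addable_removeBox_iff hq p).mp hadd with h | h
        · exact Or.inl h
        · exact Or.inr ⟨h.1, hres⟩
      · rintro (h | ⟨hadd, hres⟩)
        · subst h
          exact ⟨(addable_removeBox_iff hq _).mpr (Or.inl rfl), by rw [← ht, hdt]⟩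
        · refine ⟨(addable_removeBox_iff hq p).mpr (Or.inr ⟨hadd, ?_, ?_⟩), hres⟩
          · intro h
            rw [h, resid_rt, ← ht] at hres
            rw [hdt] at hres
            exact h1 (by linear_combination hres)
          · intro h
            rw [h, resid_dn, ← ht] at hres
            rw [hdt] at hres
            exact h1 (by linear_combination -hres)
    have hnA : ((r, c) : ℕ × ℕ) ∉ AF n l d Y := fun h => (mem_AF.mp h).1.1 hqY
    have hRF : RF n l d (removeBox Y (r, c)) = (RF n l d Y).erase (r, c) := by
      ext p
      rw [mem_RF, Finset.mem_erase, mem_RF]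
      constructor
      · rintro ⟨hrem, hres⟩
        obtain ⟨hne, hmem, hd', hr'⟩ := (removable_removeBox_iff hq p).mp hrem
        refine ⟨hne, removable_iff.mpr ⟨hmem, ?_, ?_⟩, hres⟩
        · refine (hd'.resolve_right (dn_ne (n := n) (l := l) ?_))
          rw [← ht, hres]
          rw [hdt]
          intro h; exact h1 (by linear_combination h)
        · refine (hr'.resolve_right (rt_ne (n := n) (l := l) ?_))
          rw [← ht, hres]
          rw [hdt]
          intro h; exact h1 (by linear_combination -h)
      · rintro ⟨hne, hrem, hres⟩
        rw [removable_iff] at hrem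
        exact ⟨(removable_removeBox_iff hq p).mpr
          ⟨hne, hrem.1, Or.inl hrem.2.1, Or.inl hrem.2.2⟩, hres⟩
    have hmR : ((r, c) : ℕ × ℕ) ∈ RF n l d Y := mem_RF.mpr ⟨hq, by rw [← ht, hdt]⟩
    have hca : aCartanMod l d t = 2 := by rw [hdt]; exact aCartan_self hl t
    rw [hAF, hRF, Finset.card_insert_of_notMem hnA, hca]
    have := Finset.card_erase_add_one hmR
    push_cast
    omega
  · by_cases hdt1 : d = t + 1
    · -- d = t + 1
      have hAF : AF n l d (removeBox Y (r, c)) = (AF n l d Y).erase (r, c + 1) := by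
        ext p
        rw [mem_AF, Finset.mem_erase, mem_AF]
        constructor
        · rintro ⟨hadd, hres⟩
          rcases (addable_removeBox_iff hq p).mp hadd with h | h
          · exfalso; rw [h, ← ht] at hres; exact hdt hres.symm
          · exact ⟨h.2.1, h.1, hres⟩
        · rintro ⟨hne, hadd, hres⟩
          refine ⟨(addable_removeBox_iff hq p).mpr (Or.inr ⟨hadd, hne, ?_⟩), hres⟩
          intro h
          rw [h, resid_dn, ← ht] at hres
          rw [hdt1] at hres
          exact h2 (by linear_combination -hres)
      have hRFgen : ∀ p : ℕ × ℕ, p ≠ (r - 1, c) →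
          (p ∈ RF n l d (removeBox Y (r, c)) ↔ p ∈ RF n l d Y) := by
        intro p hpu
        rw [mem_RF, mem_RF]
        constructor
        · rintro ⟨hrem, hres⟩
          obtain ⟨hne, hmem, hd', hr'⟩ := (removable_removeBox_iff hq p).mp hrem
          refine ⟨removable_iff.mpr ⟨hmem, ?_, ?_⟩, hres⟩
          · refine hd'.resolve_right ?_
            intro h
            rw [Prod.mk.injEq] at h
            exact hpu (Prod.ext (by omega) (by omega))
          · refine hr'.resolve_right (rt_ne (n := n) (l := l) ?_)
            rw [← ht, hres]
            rw [hdt1]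
            intro h; exact h2 (by linear_combination -h)
        · rintro ⟨hrem, hres⟩
          rw [removable_iff] at hrem
          refine ⟨(removable_removeBox_iff hq p).mpr
            ⟨?_, hrem.1, Or.inl hrem.2.1, Or.inl hrem.2.2⟩, hres⟩
          intro h
          rw [h, ← ht] at hres; exact hdt hres.symm
      have hca : aCartanMod l d t = -1 := by rw [hdt1]; exact aCartan_plus hl t
      by_cases hr0 : r = 0
      · -- first row : (0, c+1) addable before, R unchanged
        subst hr0
        have hmA : ((0, c + 1) : ℕ × ℕ) ∈ AF n l d Y := by
          rw [mem_AF]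
          refine ⟨addable_iff.mpr ⟨hqrt, Or.inl rfl, Or.inr (by simpa using hqY)⟩, ?_⟩
          rw [resid_rt, ← ht, hdt1]
        have hRF : RF n l d (removeBox Y (0, c)) = RF n l d Y := by
          ext p
          by_cases hp : p = ((0 - 1 : ℕ), c)
          · subst hp
            rw [mem_RF, mem_RF]
            constructor
            · rintro ⟨hrem, -⟩
              exact absurd ((removable_removeBox_iff hq _).mp hrem).1 (by norm_num)
            · rintro ⟨-, hres⟩
              rw [show (((0 - 1 : ℕ), c) : ℕ × ℕ) = ((0 : ℕ), c) from by norm_num, ← ht] at hres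
              exact absurd hres.symm hdt
          · exact hRFgen p hp
        rw [hAF, hRF, hca]
        have := Finset.card_erase_add_one hmA
        push_cast
        omega
      · by_cases hcy : ((r - 1, c + 1) : ℕ × ℕ) ∈ Y
        · -- (r, c+1) was addable ; R unchanged
          have hmA : ((r, c + 1) : ℕ × ℕ) ∈ AF n l d Y := by
            rw [mem_AF]
            refine ⟨addable_iff.mpr ⟨hqrt, Or.inr hcy, Or.inr (by simpa using hqY)⟩, ?_⟩
            rw [resid_rt, ← ht, hdt1]
          have hRF : RF n l d (removeBox Y (r, c)) = RF n l d Y := by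
            ext p
            by_cases hp : p = ((r - 1 : ℕ), c)
            · subst hp
              rw [mem_RF, mem_RF]
              constructor
              · rintro ⟨hrem, -⟩
                obtain ⟨-, -, -, hr'⟩ := (removable_removeBox_iff hq _).mp hrem
                rcases hr' with h | h
                · exact absurd hcy h
                · rw [Prod.mk.injEq] at h; omega
              · rintro ⟨hrem, -⟩
                exact absurd (Y.up_left_mem (by omega) (by omega) hqY)
                  (removable_iff.mp hrem).2.1
            · exact hRFgen p hp
          rw [hAF, hRF, hca]
          have := Finset.card_erase_add_one hmA
          push_cast
          omega
        · -- (r, c+1) not addable ; (r-1, c) becomes removable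
          have hnA : ((r, c + 1) : ℕ × ℕ) ∉ AF n l d Y := by
            rw [mem_AF]
            rintro ⟨hadd, -⟩
            rcases (addable_iff.mp hadd).2.1 with h | h
            · omega
            · exact hcy h
          have hmRnew : ((r - 1, c) : ℕ × ℕ) ∈ RF n l d (removeBox Y (r, c)) := by
            rw [mem_RF]
            refine ⟨(removable_removeBox_iff hq _).mpr
              ⟨by rw [Ne, Prod.mk.injEq]; omega,
               Y.up_left_mem (by omega) (by omega) hqY,
               Or.inr (Prod.ext (by simp; omega) rfl),
               Or.inl hcy⟩, ?_⟩
            rw [resid_up n l c hr0, ← ht, hdt1]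
          have hnR : ((r - 1, c) : ℕ × ℕ) ∉ RF n l d Y := by
            rw [mem_RF]
            rintro ⟨hrem, -⟩
            refine (removable_iff.mp hrem).2.1 ?_
            exact (show ((r - 1 + 1, c) : ℕ × ℕ) = ((r, c) : ℕ × ℕ) from Prod.ext (by simp; omega) rfl) ▸ hqY
          have hRF : RF n l d (removeBox Y (r, c)) = insert ((r - 1 : ℕ), c) (RF n l d Y) := by
            ext p
            rw [Finset.mem_insert]
            by_cases hp : p = ((r - 1 : ℕ), c)
            · subst hp
              constructor
              · intro _; exact Or.inl rfl
              · intro _; exact hmRnew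
            · rw [hRFgen p hp]
              constructor
              · exact Or.inr
              · rintro (h | h)
                · exact absurd h hp
                · exact h
          rw [hAF, hRF, Finset.erase_eq_of_notMem hnA,
            Finset.card_insert_of_notMem hnR, hca]
          push_cast
          omega
    · by_cases hdt2 : d = t - 1
      · -- d = t - 1
        have hAF : AF n l d (removeBox Y (r, c)) = (AF n l d Y).erase (r + 1, c) := by
          ext p
          rw [mem_AF, Finset.mem_erase, mem_AF]
          constructor
          · rintro ⟨hadd, hres⟩
            rcases (addable_removeBox_iff hq p).mp hadd with h | h
            · exfalso; rw [h, ← ht] at hres; exact hdt hres.symm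
            · exact ⟨h.2.2, h.1, hres⟩
          · rintro ⟨hne, hadd, hres⟩
            refine ⟨(addable_removeBox_iff hq p).mpr (Or.inr ⟨hadd, ?_, hne⟩), hres⟩
            intro h
            rw [h, resid_rt, ← ht] at hres
            rw [hdt2] at hres
            exact h2 (by linear_combination hres)
        have hRFgen : ∀ p : ℕ × ℕ, p ≠ (r, c - 1) →
            (p ∈ RF n l d (removeBox Y (r, c)) ↔ p ∈ RF n l d Y) := by
          intro p hpu
          rw [mem_RF, mem_RF]
          constructor
          · rintro ⟨hrem, hres⟩
            obtain ⟨hne, hmem, hd', hr'⟩ := (removable_removeBox_iff hq p).mp hrem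
            refine ⟨removable_iff.mpr ⟨hmem, ?_, ?_⟩, hres⟩
            · refine hd'.resolve_right (dn_ne (n := n) (l := l) ?_)
              rw [← ht, hres]
              rw [hdt2]
              intro h; exact h2 (by linear_combination h)
            · refine hr'.resolve_right ?_
              intro h
              rw [Prod.mk.injEq] at h
              exact hpu (Prod.ext (by omega) (by omega))
          · rintro ⟨hrem, hres⟩
            rw [removable_iff] at hrem
            refine ⟨(removable_removeBox_iff hq p).mpr
              ⟨?_, hrem.1, Or.inl hrem.2.1, Or.inl hrem.2.2⟩, hres⟩
            intro h
            rw [h, ← ht] at hres; exact hdt hres.symm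
        have hca : aCartanMod l d t = -1 := by rw [hdt2]; exact aCartan_minus hl t
        by_cases hc0 : c = 0
        · subst hc0
          have hmA : ((r + 1, 0) : ℕ × ℕ) ∈ AF n l d Y := by
            rw [mem_AF]
            refine ⟨addable_iff.mpr ⟨hqdn, Or.inr (by simpa using hqY), Or.inl rfl⟩, ?_⟩
            rw [resid_dn, ← ht, hdt2]
          have hRF : RF n l d (removeBox Y (r, 0)) = RF n l d Y := by
            ext p
            by_cases hp : p = (r, (0 - 1 : ℕ))
            · subst hp
              rw [mem_RF, mem_RF]
              constructor
              · rintro ⟨hrem, -⟩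
                exact absurd ((removable_removeBox_iff hq _).mp hrem).1 (by norm_num)
              · rintro ⟨-, hres⟩
                rw [show ((r, (0 - 1 : ℕ)) : ℕ × ℕ) = (r, (0 : ℕ)) from by norm_num, ← ht] at hres
                exact absurd hres.symm hdt
            · exact hRFgen p hp
          rw [hAF, hRF, hca]
          have := Finset.card_erase_add_one hmA
          push_cast
          omega
        · by_cases hcy : ((r + 1, c - 1) : ℕ × ℕ) ∈ Y
          · have hmA : ((r + 1, c) : ℕ × ℕ) ∈ AF n l d Y := by
              rw [mem_AF]
              refine ⟨addable_iff.mpr ⟨hqdn, Or.inr (by simpa using hqY), Or.inr hcy⟩, ?_⟩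
              rw [resid_dn, ← ht, hdt2]
            have hRF : RF n l d (removeBox Y (r, c)) = RF n l d Y := by
              ext p
              by_cases hp : p = (r, (c - 1 : ℕ))
              · subst hp
                rw [mem_RF, mem_RF]
                constructor
                · rintro ⟨hrem, -⟩
                  obtain ⟨-, -, hd', -⟩ := (removable_removeBox_iff hq _).mp hrem
                  rcases hd' with h | h
                  · exact absurd hcy h
                  · rw [Prod.mk.injEq] at h; omega
                · rintro ⟨hrem, -⟩
                  exact absurd (Y.up_left_mem (by omega) (by omega) hqY)
                    (removable_iff.mp hrem).2.2
              · exact hRFgen p hp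
            rw [hAF, hRF, hca]
            have := Finset.card_erase_add_one hmA
            push_cast
            omega
          · have hnA : ((r + 1, c) : ℕ × ℕ) ∉ AF n l d Y := by
              rw [mem_AF]
              rintro ⟨hadd, -⟩
              rcases (addable_iff.mp hadd).2.2 with h | h
              · omega
              · exact hcy h
            have hmRnew : ((r, c - 1) : ℕ × ℕ) ∈ RF n l d (removeBox Y (r, c)) := by
              rw [mem_RF]
              refine ⟨(removable_removeBox_iff hq _).mpr
                ⟨by rw [Ne, Prod.mk.injEq]; omega,
                 Y.up_left_mem (by omega) (by omega) hqY,
                 Or.inl hcy,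
                 Or.inr (Prod.ext rfl (by simp; omega))⟩, ?_⟩
              rw [resid_lf n l r hc0, ← ht, hdt2]
            have hnR : ((r, c - 1) : ℕ × ℕ) ∉ RF n l d Y := by
              rw [mem_RF]
              rintro ⟨hrem, -⟩
              refine (removable_iff.mp hrem).2.2 ?_
              exact (show ((r, c - 1 + 1) : ℕ × ℕ) = ((r, c) : ℕ × ℕ) from Prod.ext rfl (by simp; omega)) ▸ hqY
            have hRF : RF n l d (removeBox Y (r, c)) = insert (r, (c - 1 : ℕ)) (RF n l d Y) := by
              ext p
              rw [Finset.mem_insert]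
              by_cases hp : p = (r, (c - 1 : ℕ))
              · subst hp
                constructor
                · intro _; exact Or.inl rfl
                · intro _; exact hmRnew
              · rw [hRFgen p hp]
                constructor
                · exact Or.inr
                · rintro (h | h)
                  · exact absurd h hp
                  · exact h
            rw [hAF, hRF, Finset.erase_eq_of_notMem hnA,
              Finset.card_insert_of_notMem hnR, hca]
            push_cast
            omega
      · -- far case : nothing changes
        have hAF : AF n l d (removeBox Y (r, c)) = AF n l d Y := by
          ext p
          rw [mem_AF, mem_AF]
          constructor
          · rintro ⟨hadd, hres⟩
            rcases (addable_removeBox_iff hq p).mp hadd with h | h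
            · exfalso; rw [h, ← ht] at hres; exact hdt hres.symm
            · exact ⟨h.1, hres⟩
          · rintro ⟨hadd, hres⟩
            refine ⟨(addable_removeBox_iff hq p).mpr (Or.inr ⟨hadd, ?_, ?_⟩), hres⟩
            · intro h
              rw [h, resid_rt, ← ht] at hres
              exact hdt1 hres.symm
            · intro h
              rw [h, resid_dn, ← ht] at hres
              exact hdt2 hres.symm
        have hRF : RF n l d (removeBox Y (r, c)) = RF n l d Y := by
          ext p
          rw [mem_RF, mem_RF]
          constructor
          · rintro ⟨hrem, hres⟩
            obtain ⟨hne, hmem, hd', hr'⟩ := (removable_removeBox_iff hq p).mp hrem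
            refine ⟨removable_iff.mpr ⟨hmem, ?_, ?_⟩, hres⟩
            · refine hd'.resolve_right (dn_ne (n := n) (l := l) ?_)
              rw [← ht, hres]
              intro h
              exact hdt1 (by linear_combination -h)
            · refine hr'.resolve_right (rt_ne (n := n) (l := l) ?_)
              rw [← ht, hres]
              intro h
              exact hdt2 (by linear_combination -h)
          · rintro ⟨hrem, hres⟩
            rw [removable_iff] at hrem
            refine ⟨(removable_removeBox_iff hq p).mpr
              ⟨?_, hrem.1, Or.inl hrem.2.1, Or.inl hrem.2.2⟩, hres⟩
            intro h
            rw [h, ← ht] at hres; exact hdt hres.symm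
        rw [hAF, hRF, aCartan_far hdt hdt1 hdt2]
        ring

lemma cadd (n : ℤ) {l : ℕ} (hl : 3 ≤ l) {Y : YoungDiagram} {q : ℕ × ℕ}
    (hq : Addable Y q) (d : ZMod l) :
    ((AF n l d (addBox Y q)).card : ℤ) - ((RF n l d (addBox Y q)).card : ℤ)
      = ((AF n l d Y).card : ℤ) - ((RF n l d Y).card : ℤ) - aCartanMod l d (resid n l q) := by
  have hrem : Removable (addBox Y q) q := (removable_addBox_iff hq q).mpr (Or.inl rfl)
  have := crem n hl hrem d
  rw [removeBox_addBox_cancel hq] at this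
  linarith

lemma rel3 (n : ℤ) (l : ℕ) (hl : 3 ≤ l) (i j : ZMod l) :
    hRes n l i * eRes n l j - eRes n l j * hRes n l i = aCartanMod l i j • eRes n l j := by
  apply end_ext
  intro Y
  simp only [LinearMap.sub_apply, Module.End.mul_apply, LinearMap.smul_apply]
  have hLe : hRes n l i (eRes n l j (Finsupp.single Y 1)) =
      -∑ q ∈ RF n l j Y,
        ((((AF n l i (removeBox Y q)).card : ℤ) - ((RF n l i (removeBox Y q)).card : ℤ))
          • Finsupp.single (removeBox Y q) (1 : ℤ)) := by
    rw [eRes_single, map_neg, map_sum]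
    congr 1
    exact Finset.sum_congr rfl fun q _ => hRes_single n l i (removeBox Y q)
  have hRe : eRes n l j (hRes n l i (Finsupp.single Y 1)) =
      (((AF n l i Y).card : ℤ) - ((RF n l i Y).card : ℤ)) •
        (-∑ q ∈ RF n l j Y, Finsupp.single (removeBox Y q) (1 : ℤ)) := by
    rw [hRes_single, map_smul, eRes_single]
  rw [hLe, hRe, eRes_single]
  rw [Finset.sum_congr rfl (g := fun q =>
      ((((AF n l i Y).card : ℤ) - ((RF n l i Y).card : ℤ)) • Finsupp.single (removeBox Y q) (1 : ℤ)
        + aCartanMod l i j • Finsupp.single (removeBox Y q) (1 : ℤ)))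
    (fun q hqm => by
      rw [← add_smul, crem n hl (mem_RF.mp hqm).1 i, (mem_RF.mp hqm).2])]
  rw [Finset.sum_add_distrib, ← Finset.smul_sum, ← Finset.smul_sum]
  module

lemma rel4 (n : ℤ) (l : ℕ) (hl : 3 ≤ l) (i j : ZMod l) :
    hRes n l i * fRes n l j - fRes n l j * hRes n l i = -aCartanMod l i j • fRes n l j := by
  apply end_ext
  intro Y
  simp only [LinearMap.sub_apply, Module.End.mul_apply, LinearMap.smul_apply]
  have hLe : hRes n l i (fRes n l j (Finsupp.single Y 1)) =
      -∑ q ∈ AF n l j Y,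
        ((((AF n l i (addBox Y q)).card : ℤ) - ((RF n l i (addBox Y q)).card : ℤ))
          • Finsupp.single (addBox Y q) (1 : ℤ)) := by
    rw [fRes_single, map_neg, map_sum]
    congr 1
    exact Finset.sum_congr rfl fun q _ => hRes_single n l i (addBox Y q)
  have hRe : fRes n l j (hRes n l i (Finsupp.single Y 1)) =
      (((AF n l i Y).card : ℤ) - ((RF n l i Y).card : ℤ)) •
        (-∑ q ∈ AF n l j Y, Finsupp.single (addBox Y q) (1 : ℤ)) := by
    rw [hRes_single, map_smul, fRes_single]
  rw [hLe, hRe, fRes_single]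
  rw [Finset.sum_congr rfl (g := fun q =>
      ((((AF n l i Y).card : ℤ) - ((RF n l i Y).card : ℤ)) • Finsupp.single (addBox Y q) (1 : ℤ)
        - aCartanMod l i j • Finsupp.single (addBox Y q) (1 : ℤ)))
    (fun q hqm => by
      rw [← sub_smul, cadd n hl (mem_AF.mp hqm).1 i, (mem_AF.mp hqm).2])]
  rw [Finset.sum_sub_distrib, ← Finset.smul_sum, ← Finset.smul_sum]
  module

lemma swap_rem_mem {n : ℤ} {l : ℕ} {i j : ZMod l} (hij1 : i ≠ j + 1) (hij2 : i ≠ j - 1)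
    {Y : YoungDiagram} {p q : ℕ × ℕ}
    (hq : q ∈ RF n l j Y) (hp : p ∈ RF n l i (removeBox Y q)) :
    p ∈ RF n l i Y ∧ q ∈ RF n l j (removeBox Y p) := by
  rw [mem_RF] at hq hp
  obtain ⟨hne, hmem, hd', hr'⟩ := (removable_removeBox_iff hq.1 p).mp hp.1
  have hdn : (p.1 + 1, p.2) ∉ Y := by
    refine hd'.resolve_right (dn_ne (n := n) (l := l) ?_)
    rw [hq.2, hp.2]
    intro h; exact hij1 (by linear_combination -h)
  have hrt : (p.1, p.2 + 1) ∉ Y := by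
    refine hr'.resolve_right (rt_ne (n := n) (l := l) ?_)
    rw [hq.2, hp.2]
    intro h; exact hij2 (by linear_combination -h)
  have hremp : Removable Y p := removable_iff.mpr ⟨hmem, hdn, hrt⟩
  exact ⟨mem_RF.mpr ⟨hremp, hp.2⟩,
    mem_RF.mpr ⟨rem_preserve hremp hq.1 (fun h => hne h.symm), hq.2⟩⟩

lemma swap_rem_val {Y : YoungDiagram} {p q : ℕ × ℕ}
    (hq : Removable Y q) (hp : Removable (removeBox Y q) p)
    (hp' : Removable Y p) (hq' : Removable (removeBox Y p) q) :
    removeBox (removeBox Y q) p = removeBox (removeBox Y p) q := by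
  apply yd_ext
  rw [removeBox_cells hp, removeBox_cells hq, removeBox_cells hq', removeBox_cells hp']
  ext x
  simp only [Finset.mem_erase]
  tauto

lemma swap_add_mem {n : ℤ} {l : ℕ} {i j : ZMod l} (hij1 : i ≠ j + 1) (hij2 : i ≠ j - 1)
    {Y : YoungDiagram} {p q : ℕ × ℕ}
    (hq : q ∈ AF n l j Y) (hp : p ∈ AF n l i (addBox Y q)) :
    p ∈ AF n l i Y ∧ q ∈ AF n l j (addBox Y p) := by
  rw [mem_AF] at hq hp
  have hpq : p ≠ q := ((addable_addBox_iff hq.1 p).mp hp.1).1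
  have haddp : Addable Y p := by
    refine add_strip hq.1 hp.1 (up_ne (n := n) (l := l) (fun h => hpq h.symm) ?_) (lf_ne (n := n) (l := l) (fun h => hpq h.symm) ?_)
    · rw [hq.2, hp.2]
      intro h; exact hij2 (by linear_combination -h)
    · rw [hq.2, hp.2]
      intro h; exact hij1 (by linear_combination -h)
  exact ⟨mem_AF.mpr ⟨haddp, hp.2⟩,
    mem_AF.mpr ⟨add_preserve haddp hq.1 (fun h => hpq h.symm), hq.2⟩⟩

lemma swap_add_val {Y : YoungDiagram} {p q : ℕ × ℕ}
    (hq : Addable Y q) (hp : Addable (addBox Y q) p)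
    (hp' : Addable Y p) (hq' : Addable (addBox Y p) q) :
    addBox (addBox Y q) p = addBox (addBox Y p) q := by
  apply yd_ext
  rw [addBox_cells hp, addBox_cells hq, addBox_cells hq', addBox_cells hp']
  ext x
  simp only [Finset.mem_insert]
  tauto

lemma ee_single (n : ℤ) (l : ℕ) (i j : ZMod l) (Y : YoungDiagram) :
    eRes n l i (eRes n l j (Finsupp.single Y 1)) =
      ∑ x ∈ (RF n l j Y).sigma (fun q => RF n l i (removeBox Y q)),
        Finsupp.single (removeBox (removeBox Y x.1) x.2) (1 : ℤ) := by
  rw [eRes_single, map_neg, map_sum]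
  simp only [eRes_single]
  rw [Finset.sum_neg_distrib, neg_neg]
  exact Finset.sum_sigma' _ _ _

lemma ff_single (n : ℤ) (l : ℕ) (i j : ZMod l) (Y : YoungDiagram) :
    fRes n l i (fRes n l j (Finsupp.single Y 1)) =
      ∑ x ∈ (AF n l j Y).sigma (fun q => AF n l i (addBox Y q)),
        Finsupp.single (addBox (addBox Y x.1) x.2) (1 : ℤ) := by
  rw [fRes_single, map_neg, map_sum]
  simp only [fRes_single]
  rw [Finset.sum_neg_distrib, neg_neg]
  exact Finset.sum_sigma' _ _ _

lemma rel5e (n : ℤ) (l : ℕ) (i j : ZMod l) (hij1 : i ≠ j + 1) (hij2 : i ≠ j - 1)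
    (hji1 : j ≠ i + 1) (hji2 : j ≠ i - 1) :
    eRes n l i * eRes n l j = eRes n l j * eRes n l i := by
  apply end_ext
  intro Y
  simp only [Module.End.mul_apply]
  rw [ee_single, ee_single]
  refine Finset.sum_bij' (fun x _ => ⟨x.2, x.1⟩) (fun x _ => ⟨x.2, x.1⟩) ?_ ?_ ?_ ?_ ?_
  · rintro ⟨q, p⟩ hx
    rw [Finset.mem_sigma] at hx
    have := swap_rem_mem hij1 hij2 hx.1 hx.2
    rw [Finset.mem_sigma]
    exact ⟨this.1, this.2⟩
  · rintro ⟨p, q⟩ hx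
    rw [Finset.mem_sigma] at hx
    have := swap_rem_mem hji1 hji2 hx.1 hx.2
    rw [Finset.mem_sigma]
    exact ⟨this.1, this.2⟩
  · rintro ⟨q, p⟩ _; rfl
  · rintro ⟨p, q⟩ _; rfl
  · rintro ⟨q, p⟩ hx
    rw [Finset.mem_sigma] at hx
    have hs := swap_rem_mem hij1 hij2 hx.1 hx.2
    congr 1
    exact swap_rem_val (mem_RF.mp hx.1).1 (mem_RF.mp hx.2).1
      (mem_RF.mp hs.1).1 (mem_RF.mp hs.2).1

lemma rel5f (n : ℤ) (l : ℕ) (i j : ZMod l) (hij1 : i ≠ j + 1) (hij2 : i ≠ j - 1)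
    (hji1 : j ≠ i + 1) (hji2 : j ≠ i - 1) :
    fRes n l i * fRes n l j = fRes n l j * fRes n l i := by
  apply end_ext
  intro Y
  simp only [Module.End.mul_apply]
  rw [ff_single, ff_single]
  refine Finset.sum_bij' (fun x _ => ⟨x.2, x.1⟩) (fun x _ => ⟨x.2, x.1⟩) ?_ ?_ ?_ ?_ ?_
  · rintro ⟨q, p⟩ hx
    rw [Finset.mem_sigma] at hx
    have := swap_add_mem hij1 hij2 hx.1 hx.2
    rw [Finset.mem_sigma]
    exact ⟨this.1, this.2⟩
  · rintro ⟨p, q⟩ hx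
    rw [Finset.mem_sigma] at hx
    have := swap_add_mem hji1 hji2 hx.1 hx.2
    rw [Finset.mem_sigma]
    exact ⟨this.1, this.2⟩
  · rintro ⟨q, p⟩ _; rfl
  · rintro ⟨p, q⟩ _; rfl
  · rintro ⟨q, p⟩ hx
    rw [Finset.mem_sigma] at hx
    have hs := swap_add_mem hij1 hij2 hx.1 hx.2
    congr 1
    exact swap_add_val (mem_AF.mp hx.1).1 (mem_AF.mp hx.2).1
      (mem_AF.mp hs.1).1 (mem_AF.mp hs.2).1

def ctZ (p : ℕ × ℕ) : ℤ := (p.2 : ℤ) - p.1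

lemma ne_of_res {n : ℤ} {l : ℕ} {u v : ℕ × ℕ} (h : resid n l u ≠ resid n l v) : u ≠ v :=
  fun he => h (by rw [he])

lemma same_res_not_adj {n : ℤ} {l : ℕ} (h1 : (1 : ZMod l) ≠ 0) {u v : ℕ × ℕ}
    (h : resid n l u = resid n l v) : (u.1, u.2 + 1) ≠ v ∧ (u.1 + 1, u.2) ≠ v := by
  constructor
  · refine rt_ne (n := n) (l := l) ?_
    rw [h]
    intro hh; exact h1 (by linear_combination -hh)
  · refine dn_ne (n := n) (l := l) ?_
    rw [h]
    intro hh; exact h1 (by linear_combination hh)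

lemma far_pair {x y : ℕ × ℕ} (h : 2 ≤ ctZ x - ctZ y ∨ 2 ≤ ctZ y - ctZ x) :
    (x.1, x.2 + 1) ≠ y ∧ (x.1 + 1, x.2) ≠ y ∧ (y.1, y.2 + 1) ≠ x ∧ (y.1 + 1, y.2) ≠ x ∧ x ≠ y := by
  unfold ctZ at h
  refine ⟨?_, ?_, ?_, ?_, ?_⟩ <;> intro he <;> rw [← he] at h <;>
    (simp at h <;> omega)

lemma rem_created {Y : YoungDiagram} {b C : ℕ × ℕ} (hb : Removable Y b)
    (hC : Removable (removeBox Y b) C) (hnC : ¬Removable Y C) :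
    (C.1, C.2 + 1) = b ∨ (C.1 + 1, C.2) = b := by
  obtain ⟨hne, hmem, hd', hr'⟩ := (removable_removeBox_iff hb C).mp hC
  rcases hd' with hdn | hdn
  · rcases hr' with hrt | hrt
    · exact absurd (removable_iff.mpr ⟨hmem, hdn, hrt⟩) hnC
    · exact Or.inl hrt
  · exact Or.inr hdn

lemma rem_iff_of_far {Y : YoungDiagram} {b C : ℕ × ℕ} (hb : Removable Y b) (hCb : C ≠ b)
    (h1 : (C.1, C.2 + 1) ≠ b) (h2 : (C.1 + 1, C.2) ≠ b) :
    Removable (removeBox Y b) C ↔ Removable Y C :=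
  ⟨fun h => rem_strip hb h h2 h1, fun h => rem_preserve hb h hCb⟩

lemma rem_rem_gap {n : ℤ} {l : ℕ} (hl : 3 ≤ l) {Y : YoungDiagram} {b b' : ℕ × ℕ}
    (hres : resid n l b' = resid n l b) (hb : Removable Y b)
    (hb' : Removable (removeBox Y b) b') :
    Removable Y b' ∧ (3 ≤ ctZ b' - ctZ b ∨ 3 ≤ ctZ b - ctZ b') := by
  obtain ⟨hne, hmem, hd', hr'⟩ := (removable_removeBox_iff hb b').mp hb'
  have hct : ((b'.2 : ℤ) - b'.1) ≠ ((b.2 : ℤ) - b.1) := by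
    intro hcteq
    obtain ⟨m1, m2, m3, m4⟩ := lemU hb hmem hne hcteq
    exact m3 (hr'.resolve_left (fun hh => hh m1))
  have hgap := far_of_resid_eq hl hres hct
  have hgap' : 3 ≤ ctZ b' - ctZ b ∨ 3 ≤ ctZ b - ctZ b' := by
    unfold ctZ
    rcases le_abs.mp hgap with h | h
    · exact Or.inl (by omega)
    · exact Or.inr (by omega)
  have hfar2 : 2 ≤ ctZ b' - ctZ b ∨ 2 ≤ ctZ b - ctZ b' := by
    rcases hgap' with h | h
    · exact Or.inl (by omega)
    · exact Or.inr (by omega)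
  have hfar := far_pair hfar2
  exact ⟨rem_strip hb hb' hfar.2.1 hfar.1, hgap'⟩

lemma removeBox3_cells {Y : YoungDiagram} {a b c : ℕ × ℕ} (h1 : Removable Y a)
    (h2 : Removable (removeBox Y a) b) (h3 : Removable (removeBox (removeBox Y a) b) c) :
    (removeBox (removeBox (removeBox Y a) b) c).cells = ((Y.cells.erase a).erase b).erase c := by
  rw [removeBox_cells h3, removeBox_cells h2, removeBox_cells h1]

lemma rem3_perm_val {Y : YoungDiagram} {a b c a' b' c' : ℕ × ℕ} (h1 : Removable Y a)
    (h2 : Removable (removeBox Y a) b) (h3 : Removable (removeBox (removeBox Y a) b) c)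
    (h1' : Removable Y a') (h2' : Removable (removeBox Y a') b')
    (h3' : Removable (removeBox (removeBox Y a') b') c')
    (hperm : ∀ x : ℕ × ℕ, (x = a ∨ x = b ∨ x = c) ↔ (x = a' ∨ x = b' ∨ x = c')) :
    removeBox (removeBox (removeBox Y a) b) c = removeBox (removeBox (removeBox Y a') b') c' := by
  apply yd_ext
  rw [removeBox3_cells h1 h2 h3, removeBox3_cells h1' h2' h3']
  ext x
  simp only [Finset.mem_erase]
  have := hperm x
  constructor
  · rintro ⟨hc, hb, ha, hm⟩
    refine ⟨?_, ?_, ?_, hm⟩ <;> intro he <;> subst he <;> tauto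
  · rintro ⟨hc, hb, ha, hm⟩
    refine ⟨?_, ?_, ?_, hm⟩ <;> intro he <;> subst he <;> tauto

lemma adj_ct_rt {C b : ℕ × ℕ} (h : (C.1, C.2 + 1) = b) : ctZ b = ctZ C + 1 := by
  rw [← h]; unfold ctZ; dsimp only; push_cast; ring

lemma adj_ct_dn {C b : ℕ × ℕ} (h : (C.1 + 1, C.2) = b) : ctZ b = ctZ C - 1 := by
  rw [← h]; unfold ctZ; dsimp only; push_cast; ring

section SerreE

variable {n : ℤ} {l : ℕ} {i j : ZMod l} {Y : YoungDiagram}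

/-- Core of bijection 1 : (C,b1,b2) with b1 removable from Y maps to (b1,C,b2). -/
lemma B1e_core (hij : i ≠ j) {C b1 b2 : ℕ × ℕ}
    (hrC : resid n l C = j) (hr1 : resid n l b1 = i) (hr2 : resid n l b2 = i)
    (hC : Removable Y C) (hb1 : Removable (removeBox Y C) b1)
    (hb2 : Removable (removeBox (removeBox Y C) b1) b2) (hP : Removable Y b1) :
    Removable (removeBox Y b1) C ∧
      Removable (removeBox (removeBox Y b1) C) b2 ∧
      removeBox (removeBox (removeBox Y C) b1) b2
        = removeBox (removeBox (removeBox Y b1) C) b2 := by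
  have hCb1 : C ≠ b1 := ne_of_res (by rw [hrC, hr1]; exact fun h => hij h.symm)
  have hC' : Removable (removeBox Y b1) C := rem_preserve hP hC hCb1
  have hswap : removeBox (removeBox Y C) b1 = removeBox (removeBox Y b1) C :=
    swap_rem_val hC hb1 hP hC'
  exact ⟨hC', hswap ▸ hb2, by rw [hswap]⟩

/-- Core of bijection 3 : (b1,b2,C) with C removable from Y∖b1 maps to (b1,C,b2). -/
lemma B3e_core (hl : 3 ≤ l) (hij : i ≠ j) {b1 b2 C : ℕ × ℕ}
    (hr1 : resid n l b1 = i) (hr2 : resid n l b2 = i) (hrC : resid n l C = j)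
    (hb1 : Removable Y b1) (hb2 : Removable (removeBox Y b1) b2)
    (hC : Removable (removeBox (removeBox Y b1) b2) C) (hP : Removable (removeBox Y b1) C) :
    Removable (removeBox (removeBox Y b1) C) b2 ∧
      Removable Y b2 ∧
      removeBox (removeBox (removeBox Y b1) b2) C
        = removeBox (removeBox (removeBox Y b1) C) b2 := by
  have hb2C : b2 ≠ C := ne_of_res (by rw [hr2, hrC]; exact hij)
  have hb2' : Removable (removeBox (removeBox Y b1) C) b2 := rem_preserve hP hb2 hb2C
  have hgap := rem_rem_gap hl (hr2.trans hr1.symm) hb1 hb2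
  have hswap : removeBox (removeBox (removeBox Y b1) b2) C
      = removeBox (removeBox (removeBox Y b1) C) b2 := swap_rem_val hb2 hC hP hb2'
  exact ⟨hb2', hgap.1, hswap⟩

/-- Core of bijection 4 : (C,b1,b2) with b1 NOT removable from Y maps to (b2,C,b1). -/
lemma B4e_core (hl : 3 ≤ l) (h1 : (1 : ZMod l) ≠ 0) (hij : i ≠ j) {C b1 b2 : ℕ × ℕ}
    (hrC : resid n l C = j) (hr1 : resid n l b1 = i) (hr2 : resid n l b2 = i)
    (hC : Removable Y C) (hb1 : Removable (removeBox Y C) b1)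
    (hb2 : Removable (removeBox (removeBox Y C) b1) b2) (hP : ¬Removable Y b1) :
    Removable Y b2 ∧
      Removable (removeBox Y b2) C ∧
      Removable (removeBox (removeBox Y b2) C) b1 ∧
      removeBox (removeBox (removeBox Y C) b1) b2
        = removeBox (removeBox (removeBox Y b2) C) b1 := by
  have hCb1 : C ≠ b1 := ne_of_res (by rw [hrC, hr1]; exact fun h => hij h.symm)
  have hCb2 : C ≠ b2 := ne_of_res (by rw [hrC, hr2]; exact fun h => hij h.symm)
  have hadj := rem_created hC hb1 hP
  have hgap := rem_rem_gap hl (hr2.trans hr1.symm) hb1 hb2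
  -- C adjacent to b1, b2 far from b1, hence C far from b2
  have hctC : ctZ C = ctZ b1 + 1 ∨ ctZ C = ctZ b1 - 1 := by
    rcases hadj with h | h
    · exact Or.inl (adj_ct_rt h)
    · exact Or.inr (adj_ct_dn h)
  have hfarCb2 : 2 ≤ ctZ C - ctZ b2 ∨ 2 ≤ ctZ b2 - ctZ C := by
    rcases hctC with h | h <;> rcases hgap.2 with h' | h' <;> omega
  have hfar := far_pair hfarCb2
  have hfar12 : 2 ≤ ctZ b1 - ctZ b2 ∨ 2 ≤ ctZ b2 - ctZ b1 := by
    rcases hgap.2 with h' | h' <;> [right; left] <;> omega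
  have hfar12' := far_pair hfar12
  -- b2 is removable from Y
  have hb2Y : Removable Y b2 := rem_strip hC hgap.1 hfar.2.2.2.1 hfar.2.2.1
  have hC2 : Removable (removeBox Y b2) C := rem_preserve hb2Y hC hCb2
  have hb1ne2 : b1 ≠ b2 := hfar12'.2.2.2.2
  -- b1 removable from (Y∖b2)∖C : transfer along swap
  have hb2C : Removable (removeBox Y C) b2 := hgap.1
  have hswap1 : removeBox (removeBox Y C) b2 = removeBox (removeBox Y b2) C :=
    swap_rem_val hC hb2C hb2Y hC2
  have hb1' : Removable (removeBox (removeBox Y C) b2) b1 :=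
    rem_preserve hb2C hb1 hb1ne2
  refine ⟨hb2Y, hC2, hswap1 ▸ hb1', ?_⟩
  refine rem3_perm_val hC hb1 hb2 hb2Y hC2 (hswap1 ▸ hb1') ?_
  intro z; constructor
  · rintro (h | h | h)
    · exact Or.inr (Or.inl h)
    · exact Or.inr (Or.inr h)
    · exact Or.inl h
  · rintro (h | h | h)
    · exact Or.inr (Or.inr h)
    · exact Or.inl h
    · exact Or.inr (Or.inl h)

/-- Core of bijection 2 : (b1,b2,C) with C NOT removable from Y∖b1 maps to (b2,C,b1). -/
lemma B2e_core (hl : 3 ≤ l) (h1 : (1 : ZMod l) ≠ 0) (hij : i ≠ j) {b1 b2 C : ℕ × ℕ}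
    (hr1 : resid n l b1 = i) (hr2 : resid n l b2 = i) (hrC : resid n l C = j)
    (hb1 : Removable Y b1) (hb2 : Removable (removeBox Y b1) b2)
    (hC : Removable (removeBox (removeBox Y b1) b2) C) (hP : ¬Removable (removeBox Y b1) C) :
    Removable Y b2 ∧
      Removable (removeBox Y b2) C ∧
      Removable (removeBox (removeBox Y b2) C) b1 ∧
      ¬Removable Y C ∧
      removeBox (removeBox (removeBox Y b1) b2) C
        = removeBox (removeBox (removeBox Y b2) C) b1 := by
  have hCb1 : C ≠ b1 := ne_of_res (by rw [hrC, hr1]; exact fun h => hij h.symm)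
  have hCb2 : C ≠ b2 := ne_of_res (by rw [hrC, hr2]; exact fun h => hij h.symm)
  have hgap := rem_rem_gap hl (hr2.trans hr1.symm) hb1 hb2
  have hadj := rem_created hb2 hC hP
  have hctC : ctZ b2 = ctZ C + 1 ∨ ctZ b2 = ctZ C - 1 := by
    rcases hadj with h | h
    · exact Or.inl (adj_ct_rt h)
    · exact Or.inr (adj_ct_dn h)
  have hfarCb1 : 2 ≤ ctZ C - ctZ b1 ∨ 2 ≤ ctZ b1 - ctZ C := by
    rcases hctC with h | h <;> rcases hgap.2 with h' | h' <;> omega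
  have hfar := far_pair hfarCb1
  have hb1ne2 : b2 ≠ b1 := by
    have hfar12 : 2 ≤ ctZ b2 - ctZ b1 ∨ 2 ≤ ctZ b1 - ctZ b2 := by
      rcases hgap.2 with h' | h' <;> [left; right] <;> omega
    exact (far_pair hfar12).2.2.2.2
  have hb2Y : Removable Y b2 := hgap.1
  have hb1' : Removable (removeBox Y b2) b1 := rem_preserve hb2Y hb1 (Ne.symm hb1ne2)
  have hswap1 : removeBox (removeBox Y b1) b2 = removeBox (removeBox Y b2) b1 :=
    swap_rem_val hb1 hb2 hb2Y hb1'
  -- C removable from Y∖b2 : strip b1 after reordering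
  have hC2' : Removable (removeBox (removeBox Y b2) b1) C := hswap1 ▸ hC
  have hC2 : Removable (removeBox Y b2) C :=
    rem_strip hb1' hC2' hfar.2.1 hfar.1
  have hb1'' : Removable (removeBox (removeBox Y b2) C) b1 := rem_preserve hC2 hb1' hCb1.symm
  have hnC : ¬Removable Y C := fun h => hP (rem_preserve hb1 h hCb1)
  refine ⟨hb2Y, hC2, hb1'', hnC, ?_⟩
  refine rem3_perm_val hb1 hb2 hC hb2Y hC2 hb1'' ?_
  intro z; constructor
  · rintro (h | h | h)
    · exact Or.inr (Or.inr h)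
    · exact Or.inl h
    · exact Or.inr (Or.inl h)
  · rintro (h | h | h)
    · exact Or.inr (Or.inl h)
    · exact Or.inr (Or.inr h)
    · exact Or.inl h

end SerreE

section SerreEInv

variable {n : ℤ} {l : ℕ} {i j : ZMod l} {Y : YoungDiagram}

lemma chain2_mem {Y : YoungDiagram} {x C y : ℕ × ℕ} (hx : Removable Y x)
    (hC : Removable (removeBox Y x) C) (hy : Removable (removeBox (removeBox Y x) C) y) :
    y ∈ Y ∧ y ≠ x ∧ y ≠ C := by
  obtain ⟨h0, h1, -, -⟩ := (removable_removeBox_iff hC y).mp hy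
  have h2 := (mem_removeBox hx y).mp h1
  exact ⟨h2.2, h2.1, h0⟩

lemma chain2_excuse {Y : YoungDiagram} {x C y : ℕ × ℕ} (hx : Removable Y x)
    (hC : Removable (removeBox Y x) C) (hy : Removable (removeBox (removeBox Y x) C) y) :
    ((y.1 + 1, y.2) ∉ Y ∨ (y.1 + 1, y.2) = x ∨ (y.1 + 1, y.2) = C) ∧
      ((y.1, y.2 + 1) ∉ Y ∨ (y.1, y.2 + 1) = x ∨ (y.1, y.2 + 1) = C) := by
  obtain ⟨-, -, hd, hr⟩ := (removable_removeBox_iff hC y).mp hy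
  constructor
  · rcases hd with h | h
    · rw [mem_removeBox hx] at h
      by_cases he : (y.1 + 1, y.2) = x
      · exact Or.inr (Or.inl he)
      · exact Or.inl (fun hm => h ⟨he, hm⟩)
    · exact Or.inr (Or.inr h)
  · rcases hr with h | h
    · rw [mem_removeBox hx] at h
      by_cases he : (y.1, y.2 + 1) = x
      · exact Or.inr (Or.inl he)
      · exact Or.inl (fun hm => h ⟨he, hm⟩)
    · exact Or.inr (Or.inr h)

lemma ct_ne_of_excuse {Y : YoungDiagram} {x C y : ℕ × ℕ} (hx : Removable Y x) (hy : y ∈ Y)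
    (hyx : y ≠ x)
    (hd : (y.1 + 1, y.2) ∉ Y ∨ (y.1 + 1, y.2) = x ∨ (y.1 + 1, y.2) = C)
    (hr : (y.1, y.2 + 1) ∉ Y ∨ (y.1, y.2 + 1) = x ∨ (y.1, y.2 + 1) = C)
    (hrtx : (y.1, y.2 + 1) ≠ x) (hdnx : (y.1 + 1, y.2) ≠ x) : ctZ y ≠ ctZ x := by
  intro he
  obtain ⟨m1, m2, m3, m4⟩ := lemU hx hy hyx he
  have hrtC : (y.1, y.2 + 1) = C := by
    rcases hr with h | h | h
    · exact absurd m1 h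
    · exact absurd h hrtx
    · exact h
  have hdnC : (y.1 + 1, y.2) = C := by
    rcases hd with h | h | h
    · exact absurd m2 h
    · exact absurd h hdnx
    · exact h
  rw [← hdnC, Prod.mk.injEq] at hrtC
  omega

/-- Inverse of bijection 1 : (x,C,y) with C removable from Y maps to (C,x,y). -/
lemma B1e_inv (hij : i ≠ j) {x C y : ℕ × ℕ}
    (hrx : resid n l x = i) (hrC : resid n l C = j)
    (hx : Removable Y x) (hC : Removable (removeBox Y x) C)
    (hy : Removable (removeBox (removeBox Y x) C) y) (hQ : Removable Y C) :
    Removable (removeBox Y C) x ∧ Removable (removeBox (removeBox Y C) x) y := by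
  have hxC : x ≠ C := ne_of_res (by rw [hrx, hrC]; exact hij)
  have hx' : Removable (removeBox Y C) x := rem_preserve hQ hx hxC
  have hswap : removeBox (removeBox Y x) C = removeBox (removeBox Y C) x :=
    swap_rem_val hx hC hQ hx'
  exact ⟨hx', hswap ▸ hy⟩

/-- Inverse of bijection 3 : (x,C,y) with y removable from Y maps to (x,y,C). -/
lemma B3e_inv (hij : i ≠ j) {x C y : ℕ × ℕ}
    (hrC : resid n l C = j) (hry : resid n l y = i)
    (hx : Removable Y x) (hC : Removable (removeBox Y x) C)
    (hy : Removable (removeBox (removeBox Y x) C) y) (hQ : Removable Y y) :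
    Removable (removeBox Y x) y ∧ Removable (removeBox (removeBox Y x) y) C ∧
      removeBox (removeBox (removeBox Y x) C) y
        = removeBox (removeBox (removeBox Y x) y) C := by
  obtain ⟨hymem, hyx, hyC⟩ := chain2_mem hx hC hy
  have hCy : C ≠ y := ne_of_res (by rw [hrC, hry]; exact fun h => hij h.symm)
  have hy' : Removable (removeBox Y x) y := rem_preserve hx hQ hyx
  have hC' : Removable (removeBox (removeBox Y x) y) C := rem_preserve hy' hC hCy
  exact ⟨hy', hC', swap_rem_val hC hy hy' hC'⟩

/-- Inverse of bijection 4 : (x,C,y) with y NOT removable from Y maps to (C,y,x). -/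
lemma B4e_inv (hl : 3 ≤ l) (h1 : (1 : ZMod l) ≠ 0) (hij : i ≠ j) {x C y : ℕ × ℕ}
    (hrx : resid n l x = i) (hrC : resid n l C = j) (hry : resid n l y = i)
    (hx : Removable Y x) (hC : Removable (removeBox Y x) C)
    (hy : Removable (removeBox (removeBox Y x) C) y) (hnQ : ¬Removable Y y) :
    Removable Y C ∧ Removable (removeBox Y C) y ∧
      Removable (removeBox (removeBox Y C) y) x := by
  obtain ⟨hymem, hyx, hyC⟩ := chain2_mem hx hC hy
  obtain ⟨hd, hr⟩ := chain2_excuse hx hC hy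
  have hxC : x ≠ C := ne_of_res (by rw [hrx, hrC]; exact hij)
  have hnadj := same_res_not_adj h1 (hry.trans hrx.symm)
  have hct : ctZ y ≠ ctZ x := ct_ne_of_excuse hx hymem hyx hd hr hnadj.1 hnadj.2
  have hgap := far_of_resid_eq hl (hry.trans hrx.symm) hct
  have hgap' : 3 ≤ ctZ y - ctZ x ∨ 3 ≤ ctZ x - ctZ y := by
    unfold ctZ
    rcases le_abs.mp hgap with h | h
    · exact Or.inl (by unfold ctZ at *; omega)
    · exact Or.inr (by unfold ctZ at *; omega)
  -- y is adjacent to C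
  have hadjC : (y.1, y.2 + 1) = C ∨ (y.1 + 1, y.2) = C := by
    rw [removable_iff] at hnQ
    by_cases hdn : (y.1 + 1, y.2) ∈ Y
    · rcases hd with h | h | h
      · exact absurd hdn h
      · exact absurd h hnadj.2
      · exact Or.inr h
    · by_cases hrt : (y.1, y.2 + 1) ∈ Y
      · rcases hr with h | h | h
        · exact absurd hrt h
        · exact absurd h hnadj.1
        · exact Or.inl h
      · exact absurd ⟨hymem, hdn, hrt⟩ hnQ
  have hctC : ctZ C = ctZ y + 1 ∨ ctZ C = ctZ y - 1 := by
    rcases hadjC with h | h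
    · exact Or.inl (adj_ct_rt h)
    · exact Or.inr (adj_ct_dn h)
  have hfarCx : 2 ≤ ctZ C - ctZ x ∨ 2 ≤ ctZ x - ctZ C := by
    rcases hctC with h | h <;> rcases hgap' with h' | h' <;> omega
  have hfar := far_pair hfarCx
  -- C removable from Y
  have hQC : Removable Y C := rem_strip hx hC hfar.2.1 hfar.1
  have hx' : Removable (removeBox Y C) x := rem_preserve hQC hx hxC
  have hswap : removeBox (removeBox Y x) C = removeBox (removeBox Y C) x :=
    swap_rem_val hx hC hQC hx'
  have hy' : Removable (removeBox (removeBox Y C) x) y := hswap ▸ hy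
  have hy'' : Removable (removeBox Y C) y := rem_strip hx' hy' hnadj.2 hnadj.1
  exact ⟨hQC, hy'', rem_preserve hy'' hx' (fun h => hyx h.symm)⟩

/-- Inverse of bijection 2 : (x,C,y) with C NOT removable from Y maps to (y,x,C). -/
lemma B2e_inv (hl : 3 ≤ l) (h1 : (1 : ZMod l) ≠ 0) (hij : i ≠ j) {x C y : ℕ × ℕ}
    (hrx : resid n l x = i) (hrC : resid n l C = j) (hry : resid n l y = i)
    (hx : Removable Y x) (hC : Removable (removeBox Y x) C)
    (hy : Removable (removeBox (removeBox Y x) C) y) (hnQ : ¬Removable Y C) :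
    Removable Y y ∧ Removable (removeBox Y y) x ∧
      Removable (removeBox (removeBox Y y) x) C ∧
      ¬Removable (removeBox Y y) C := by
  obtain ⟨hymem, hyx, hyC⟩ := chain2_mem hx hC hy
  obtain ⟨hd, hr⟩ := chain2_excuse hx hC hy
  have hCy : C ≠ y := ne_of_res (by rw [hrC, hry]; exact fun h => hij h.symm)
  have hnadj := same_res_not_adj h1 (hry.trans hrx.symm)
  have hct : ctZ y ≠ ctZ x := ct_ne_of_excuse hx hymem hyx hd hr hnadj.1 hnadj.2
  have hgap := far_of_resid_eq hl (hry.trans hrx.symm) hct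
  have hgap' : 3 ≤ ctZ y - ctZ x ∨ 3 ≤ ctZ x - ctZ y := by
    rcases le_abs.mp hgap with h | h
    · exact Or.inl (by unfold ctZ at *; omega)
    · exact Or.inr (by unfold ctZ at *; omega)
  -- C created by x
  have hadjC := rem_created hx hC hnQ
  have hctC : ctZ x = ctZ C + 1 ∨ ctZ x = ctZ C - 1 := by
    rcases hadjC with h | h
    · exact Or.inl (adj_ct_rt h)
    · exact Or.inr (adj_ct_dn h)
  have hfarCy : 2 ≤ ctZ C - ctZ y ∨ 2 ≤ ctZ y - ctZ C := by
    rcases hctC with h | h <;> rcases hgap' with h' | h' <;> omega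
  have hfar := far_pair hfarCy
  -- strip C then x from y's removability
  have hy1 : Removable (removeBox Y x) y := rem_strip hC hy hfar.2.2.2.1 hfar.2.2.1
  have hy2 : Removable Y y := rem_strip hx hy1 hnadj.2 hnadj.1
  have hx' : Removable (removeBox Y y) x := rem_preserve hy2 hx (fun h => hyx h.symm)
  have hC1 : Removable (removeBox (removeBox Y x) y) C := rem_preserve hy1 hC hCy
  have hswap : removeBox (removeBox Y x) y = removeBox (removeBox Y y) x :=
    swap_rem_val hx hy1 hy2 hx'
  refine ⟨hy2, hx', hswap ▸ hC1, ?_⟩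
  intro h
  exact hnQ (rem_strip hy2 h hfar.2.1 hfar.1)

end SerreEInv

lemma sum_sigma3 {M : Type*} [AddCommMonoid M] (s : Finset (ℕ × ℕ))
    (t : ℕ × ℕ → Finset (ℕ × ℕ)) (u : ℕ × ℕ → ℕ × ℕ → Finset (ℕ × ℕ))
    (f : ℕ × ℕ → ℕ × ℕ → ℕ × ℕ → M) :
    ∑ a ∈ s, ∑ b ∈ t a, ∑ c ∈ u a b, f a b c
      = ∑ x ∈ s.sigma (fun a => (t a).sigma (fun b => u a b)), f x.1 x.2.1 x.2.2 := by
  have inner : ∀ a, ∑ b ∈ t a, ∑ c ∈ u a b, f a b c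
      = ∑ y ∈ (t a).sigma (fun b => u a b), f a y.1 y.2 := fun a => Finset.sum_sigma' _ _ _
  rw [Finset.sum_congr rfl (fun a _ => inner a)]
  exact Finset.sum_sigma' _ _ _

noncomputable def WE (n : ℤ) (l : ℕ) (i1 i2 i3 : ZMod l) (Y : YoungDiagram) :
    Finset ((_ : ℕ × ℕ) × (_ : ℕ × ℕ) × ℕ × ℕ) :=
  (RF n l i3 Y).sigma (fun a => (RF n l i2 (removeBox Y a)).sigma
    (fun b => RF n l i1 (removeBox (removeBox Y a) b)))

lemma mem_WE {n : ℤ} {l : ℕ} {i1 i2 i3 : ZMod l} {Y : YoungDiagram}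
    {x : (_ : ℕ × ℕ) × (_ : ℕ × ℕ) × ℕ × ℕ} :
    x ∈ WE n l i1 i2 i3 Y ↔ x.1 ∈ RF n l i3 Y ∧ x.2.1 ∈ RF n l i2 (removeBox Y x.1)
      ∧ x.2.2 ∈ RF n l i1 (removeBox (removeBox Y x.1) x.2.1) := by
  obtain ⟨a, b, c⟩ := x
  simp only [WE, Finset.mem_sigma]

lemma eee_single (n : ℤ) (l : ℕ) (i1 i2 i3 : ZMod l) (Y : YoungDiagram) :
    eRes n l i1 (eRes n l i2 (eRes n l i3 (Finsupp.single Y 1))) =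
      -∑ x ∈ WE n l i1 i2 i3 Y,
        Finsupp.single (removeBox (removeBox (removeBox Y x.1) x.2.1) x.2.2) (1 : ℤ) := by
  rw [eRes_single n l i3 Y, map_neg, map_sum]
  simp only [eRes_single]
  rw [Finset.sum_neg_distrib, neg_neg, map_sum]
  simp only [map_sum, eRes_single]
  simp only [Finset.sum_neg_distrib]
  rw [WE]
  congr 1
  exact sum_sigma3 _ _ _ _

lemma serre_e (n : ℤ) (l : ℕ) (hl : 3 ≤ l) (i j : ZMod l) (hij : i = j + 1 ∨ i = j - 1) :
    eRes n l i * (eRes n l i * eRes n l j - eRes n l j * eRes n l i)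
      - (eRes n l i * eRes n l j - eRes n l j * eRes n l i) * eRes n l i = 0 := by
  have h1 : (1 : ZMod l) ≠ 0 := zmod_one_ne_zero hl
  have hijne : i ≠ j := by
    rcases hij with h | h
    · rw [h]; intro hh; exact h1 (by linear_combination hh)
    · rw [h]; intro hh; exact h1 (by linear_combination -hh)
  have expand : eRes n l i * (eRes n l i * eRes n l j - eRes n l j * eRes n l i)
      - (eRes n l i * eRes n l j - eRes n l j * eRes n l i) * eRes n l i
      = (eRes n l i * (eRes n l i * eRes n l j) + eRes n l j * (eRes n l i * eRes n l i))
        - (eRes n l i * (eRes n l j * eRes n l i) + eRes n l i * (eRes n l j * eRes n l i)) := by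
    noncomm_ring
  rw [expand, sub_eq_zero]
  apply end_ext
  intro Y
  simp only [LinearMap.add_apply, Module.End.mul_apply]
  rw [eee_single n l i i j Y, eee_single n l j i i Y, eee_single n l i j i Y]
  rw [← neg_add, ← neg_add, neg_inj]
  rw [← Finset.sum_filter_add_sum_filter_not (WE n l i i j Y) (fun x => Removable Y x.2.1),
      ← Finset.sum_filter_add_sum_filter_not (WE n l j i i Y)
        (fun x => Removable (removeBox Y x.1) x.2.2)]
  have hQ2 : ∑ x ∈ WE n l i j i Y,
        Finsupp.single (removeBox (removeBox (removeBox Y x.1) x.2.1) x.2.2) (1 : ℤ)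
      = (∑ x ∈ (WE n l i j i Y).filter (fun x => Removable Y x.2.2),
          Finsupp.single (removeBox (removeBox (removeBox Y x.1) x.2.1) x.2.2) (1 : ℤ))
        + ∑ x ∈ (WE n l i j i Y).filter (fun x => ¬Removable Y x.2.2),
          Finsupp.single (removeBox (removeBox (removeBox Y x.1) x.2.1) x.2.2) (1 : ℤ) :=
    (Finset.sum_filter_add_sum_filter_not _ _ _).symm
  have hQ1 : ∑ x ∈ WE n l i j i Y,
        Finsupp.single (removeBox (removeBox (removeBox Y x.1) x.2.1) x.2.2) (1 : ℤ)
      = (∑ x ∈ (WE n l i j i Y).filter (fun x => Removable Y x.2.1),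
          Finsupp.single (removeBox (removeBox (removeBox Y x.1) x.2.1) x.2.2) (1 : ℤ))
        + ∑ x ∈ (WE n l i j i Y).filter (fun x => ¬Removable Y x.2.1),
          Finsupp.single (removeBox (removeBox (removeBox Y x.1) x.2.1) x.2.2) (1 : ℤ) :=
    (Finset.sum_filter_add_sum_filter_not _ _ _).symm
  nth_rewrite 2 [hQ2]
  rw [hQ1]
  have e1 : ∑ x ∈ (WE n l i i j Y).filter (fun x => Removable Y x.2.1),
        Finsupp.single (removeBox (removeBox (removeBox Y x.1) x.2.1) x.2.2) (1 : ℤ)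
      = ∑ x ∈ (WE n l i j i Y).filter (fun x => Removable Y x.2.1),
        Finsupp.single (removeBox (removeBox (removeBox Y x.1) x.2.1) x.2.2) (1 : ℤ) := by
    refine Finset.sum_bij' (fun x _ => ⟨x.2.1, x.1, x.2.2⟩) (fun x _ => ⟨x.2.1, x.1, x.2.2⟩)
      ?_ ?_ ?_ ?_ ?_
    · rintro ⟨C, b1, b2⟩ hx
      rw [Finset.mem_filter, mem_WE] at hx
      obtain ⟨⟨hC, hb1, hb2⟩, hP⟩ := hx
      rw [mem_RF] at hC hb1 hb2
      obtain ⟨hc1, hc2, -⟩ := B1e_core hijne hC.2 hb1.2 hb2.2 hC.1 hb1.1 hb2.1 hP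
      rw [Finset.mem_filter, mem_WE]
      exact ⟨⟨mem_RF.mpr ⟨hP, hb1.2⟩, mem_RF.mpr ⟨hc1, hC.2⟩, mem_RF.mpr ⟨hc2, hb2.2⟩⟩, hC.1⟩
    · rintro ⟨x, C, y⟩ hw
      rw [Finset.mem_filter, mem_WE] at hw
      obtain ⟨⟨hx, hC, hy⟩, hQ⟩ := hw
      rw [mem_RF] at hx hC hy
      obtain ⟨hc1, hc2⟩ := B1e_inv hijne hx.2 hC.2 hx.1 hC.1 hy.1 hQ
      rw [Finset.mem_filter, mem_WE]
      exact ⟨⟨mem_RF.mpr ⟨hQ, hC.2⟩, mem_RF.mpr ⟨hc1, hx.2⟩, mem_RF.mpr ⟨hc2, hy.2⟩⟩, hx.1⟩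
    · rintro ⟨a, b, c⟩ _; rfl
    · rintro ⟨a, b, c⟩ _; rfl
    · rintro ⟨C, b1, b2⟩ hx
      rw [Finset.mem_filter, mem_WE] at hx
      obtain ⟨⟨hC, hb1, hb2⟩, hP⟩ := hx
      rw [mem_RF] at hC hb1 hb2
      obtain ⟨-, -, hval⟩ := B1e_core hijne hC.2 hb1.2 hb2.2 hC.1 hb1.1 hb2.1 hP
      rw [hval]
  have e2 : ∑ x ∈ (WE n l i i j Y).filter (fun x => ¬Removable Y x.2.1),
        Finsupp.single (removeBox (removeBox (removeBox Y x.1) x.2.1) x.2.2) (1 : ℤ)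
      = ∑ x ∈ (WE n l i j i Y).filter (fun x => ¬Removable Y x.2.2),
        Finsupp.single (removeBox (removeBox (removeBox Y x.1) x.2.1) x.2.2) (1 : ℤ) := by
    refine Finset.sum_bij' (fun x _ => ⟨x.2.2, x.1, x.2.1⟩) (fun x _ => ⟨x.2.1, x.2.2, x.1⟩)
      ?_ ?_ ?_ ?_ ?_
    · rintro ⟨C, b1, b2⟩ hx
      rw [Finset.mem_filter, mem_WE] at hx
      obtain ⟨⟨hC, hb1, hb2⟩, hP⟩ := hx
      rw [mem_RF] at hC hb1 hb2
      obtain ⟨hb2Y, hC2, hb1'', -⟩ := B4e_core hl h1 hijne hC.2 hb1.2 hb2.2 hC.1 hb1.1 hb2.1 hP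
      rw [Finset.mem_filter, mem_WE]
      exact ⟨⟨mem_RF.mpr ⟨hb2Y, hb2.2⟩, mem_RF.mpr ⟨hC2, hC.2⟩, mem_RF.mpr ⟨hb1'', hb1.2⟩⟩, hP⟩
    · rintro ⟨x, C, y⟩ hw
      rw [Finset.mem_filter, mem_WE] at hw
      obtain ⟨⟨hx, hC, hy⟩, hnQ⟩ := hw
      rw [mem_RF] at hx hC hy
      obtain ⟨hQC, hy'', hx''⟩ := B4e_inv hl h1 hijne hx.2 hC.2 hy.2 hx.1 hC.1 hy.1 hnQ
      rw [Finset.mem_filter, mem_WE]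
      exact ⟨⟨mem_RF.mpr ⟨hQC, hC.2⟩, mem_RF.mpr ⟨hy'', hy.2⟩, mem_RF.mpr ⟨hx'', hx.2⟩⟩, hnQ⟩
    · rintro ⟨a, b, c⟩ _; rfl
    · rintro ⟨a, b, c⟩ _; rfl
    · rintro ⟨C, b1, b2⟩ hx
      rw [Finset.mem_filter, mem_WE] at hx
      obtain ⟨⟨hC, hb1, hb2⟩, hP⟩ := hx
      rw [mem_RF] at hC hb1 hb2
      obtain ⟨-, -, -, hval⟩ := B4e_core hl h1 hijne hC.2 hb1.2 hb2.2 hC.1 hb1.1 hb2.1 hP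
      rw [hval]
  have e3 : ∑ x ∈ (WE n l j i i Y).filter (fun x => Removable (removeBox Y x.1) x.2.2),
        Finsupp.single (removeBox (removeBox (removeBox Y x.1) x.2.1) x.2.2) (1 : ℤ)
      = ∑ x ∈ (WE n l i j i Y).filter (fun x => Removable Y x.2.2),
        Finsupp.single (removeBox (removeBox (removeBox Y x.1) x.2.1) x.2.2) (1 : ℤ) := by
    refine Finset.sum_bij' (fun x _ => ⟨x.1, x.2.2, x.2.1⟩) (fun x _ => ⟨x.1, x.2.2, x.2.1⟩)
      ?_ ?_ ?_ ?_ ?_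
    · rintro ⟨b1, b2, C⟩ hx
      rw [Finset.mem_filter, mem_WE] at hx
      obtain ⟨⟨hb1, hb2, hC⟩, hP⟩ := hx
      rw [mem_RF] at hb1 hb2 hC
      obtain ⟨hb2', hb2Y, -⟩ := B3e_core hl hijne hb1.2 hb2.2 hC.2 hb1.1 hb2.1 hC.1 hP
      rw [Finset.mem_filter, mem_WE]
      exact ⟨⟨mem_RF.mpr ⟨hb1.1, hb1.2⟩, mem_RF.mpr ⟨hP, hC.2⟩, mem_RF.mpr ⟨hb2', hb2.2⟩⟩, hb2Y⟩
    · rintro ⟨x, C, y⟩ hw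
      rw [Finset.mem_filter, mem_WE] at hw
      obtain ⟨⟨hx, hC, hy⟩, hQ⟩ := hw
      rw [mem_RF] at hx hC hy
      obtain ⟨hy', hC', -⟩ := B3e_inv hijne hC.2 hy.2 hx.1 hC.1 hy.1 hQ
      rw [Finset.mem_filter, mem_WE]
      exact ⟨⟨mem_RF.mpr ⟨hx.1, hx.2⟩, mem_RF.mpr ⟨hy', hy.2⟩, mem_RF.mpr ⟨hC', hC.2⟩⟩, hC.1⟩
    · rintro ⟨a, b, c⟩ _; rfl
    · rintro ⟨a, b, c⟩ _; rfl
    · rintro ⟨b1, b2, C⟩ hx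
      rw [Finset.mem_filter, mem_WE] at hx
      obtain ⟨⟨hb1, hb2, hC⟩, hP⟩ := hx
      rw [mem_RF] at hb1 hb2 hC
      obtain ⟨-, -, hval⟩ := B3e_core hl hijne hb1.2 hb2.2 hC.2 hb1.1 hb2.1 hC.1 hP
      rw [hval]
  have e4 : ∑ x ∈ (WE n l j i i Y).filter (fun x => ¬Removable (removeBox Y x.1) x.2.2),
        Finsupp.single (removeBox (removeBox (removeBox Y x.1) x.2.1) x.2.2) (1 : ℤ)
      = ∑ x ∈ (WE n l i j i Y).filter (fun x => ¬Removable Y x.2.1),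
        Finsupp.single (removeBox (removeBox (removeBox Y x.1) x.2.1) x.2.2) (1 : ℤ) := by
    refine Finset.sum_bij' (fun x _ => ⟨x.2.1, x.2.2, x.1⟩) (fun x _ => ⟨x.2.2, x.1, x.2.1⟩)
      ?_ ?_ ?_ ?_ ?_
    · rintro ⟨b1, b2, C⟩ hx
      rw [Finset.mem_filter, mem_WE] at hx
      obtain ⟨⟨hb1, hb2, hC⟩, hP⟩ := hx
      rw [mem_RF] at hb1 hb2 hC
      obtain ⟨hb2Y, hC2, hb1'', hnC, -⟩ :=
        B2e_core hl h1 hijne hb1.2 hb2.2 hC.2 hb1.1 hb2.1 hC.1 hP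
      rw [Finset.mem_filter, mem_WE]
      exact ⟨⟨mem_RF.mpr ⟨hb2Y, hb2.2⟩, mem_RF.mpr ⟨hC2, hC.2⟩, mem_RF.mpr ⟨hb1'', hb1.2⟩⟩, hnC⟩
    · rintro ⟨x, C, y⟩ hw
      rw [Finset.mem_filter, mem_WE] at hw
      obtain ⟨⟨hx, hC, hy⟩, hnQ⟩ := hw
      rw [mem_RF] at hx hC hy
      obtain ⟨hy2, hx', hC'', hnP3⟩ := B2e_inv hl h1 hijne hx.2 hC.2 hy.2 hx.1 hC.1 hy.1 hnQ
      rw [Finset.mem_filter, mem_WE]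
      exact ⟨⟨mem_RF.mpr ⟨hy2, hy.2⟩, mem_RF.mpr ⟨hx', hx.2⟩, mem_RF.mpr ⟨hC'', hC.2⟩⟩, hnP3⟩
    · rintro ⟨a, b, c⟩ _; rfl
    · rintro ⟨a, b, c⟩ _; rfl
    · rintro ⟨b1, b2, C⟩ hx
      rw [Finset.mem_filter, mem_WE] at hx
      obtain ⟨⟨hb1, hb2, hC⟩, hP⟩ := hx
      rw [mem_RF] at hb1 hb2 hC
      obtain ⟨-, -, -, -, hval⟩ :=
        B2e_core hl h1 hijne hb1.2 hb2.2 hC.2 hb1.1 hb2.1 hC.1 hP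
      rw [hval]
  rw [e1, e2, e3, e4]
  abel

lemma adj_ct_up {C b : ℕ × ℕ} (h : (C.1 - 1, C.2) = b) (h0 : C.1 ≠ 0) : ctZ b = ctZ C + 1 := by
  rw [← h]; unfold ctZ; dsimp only; omega

lemma adj_ct_lf {C b : ℕ × ℕ} (h : (C.1, C.2 - 1) = b) (h0 : C.2 ≠ 0) : ctZ b = ctZ C - 1 := by
  rw [← h]; unfold ctZ; dsimp only; omega

lemma far_pair_add {x y : ℕ × ℕ} (hne : x ≠ y)
    (h : 2 ≤ ctZ x - ctZ y ∨ 2 ≤ ctZ y - ctZ x) :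
    (x.1 - 1, x.2) ≠ y ∧ (x.1, x.2 - 1) ≠ y ∧ (y.1 - 1, y.2) ≠ x ∧ (y.1, y.2 - 1) ≠ x := by
  unfold ctZ at h
  refine ⟨?_, ?_, ?_, ?_⟩ <;> intro he
  · rcases Nat.eq_zero_or_pos x.1 with h0 | h0
    · have hx : (x.1 - 1, x.2) = x := Prod.ext (by omega) rfl
      exact hne (hx.symm.trans he)
    · rw [← he] at h; dsimp only at h
      rcases h with h | h <;> omega
  · rcases Nat.eq_zero_or_pos x.2 with h0 | h0
    · have hx : (x.1, x.2 - 1) = x := Prod.ext rfl (by omega)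
      exact hne (hx.symm.trans he)
    · rw [← he] at h; dsimp only at h
      rcases h with h | h <;> omega
  · rcases Nat.eq_zero_or_pos y.1 with h0 | h0
    · have hy : (y.1 - 1, y.2) = y := Prod.ext (by omega) rfl
      exact hne (hy.symm.trans he).symm
    · rw [← he] at h; dsimp only at h
      rcases h with h | h <;> omega
  · rcases Nat.eq_zero_or_pos y.2 with h0 | h0
    · have hy : (y.1, y.2 - 1) = y := Prod.ext rfl (by omega)
      exact hne (hy.symm.trans he).symm
    · rw [← he] at h; dsimp only at h
      rcases h with h | h <;> omega

lemma add_created {Y : YoungDiagram} {b C : ℕ × ℕ} (hb : Addable Y b)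
    (hC : Addable (addBox Y b) C) (hnC : ¬Addable Y C) :
    ((C.1 - 1, C.2) = b ∧ C.1 ≠ 0) ∨ ((C.1, C.2 - 1) = b ∧ C.2 ≠ 0) := by
  obtain ⟨hne, hmem, hu, hlf⟩ := (addable_addBox_iff hb C).mp hC
  by_cases h0 : C.1 ≠ 0 ∧ (C.1 - 1, C.2) ∉ Y
  · rcases hu with h | h | h
    · exact absurd h h0.1
    · exact absurd h h0.2
    · exact Or.inl ⟨h, h0.1⟩
  · have hup : C.1 = 0 ∨ (C.1 - 1, C.2) ∈ Y := by tauto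
    by_cases h0' : C.2 ≠ 0 ∧ (C.1, C.2 - 1) ∉ Y
    · rcases hlf with h | h | h
      · exact absurd h h0'.1
      · exact absurd h h0'.2
      · exact Or.inr ⟨h, h0'.1⟩
    · have hlf' : C.2 = 0 ∨ (C.1, C.2 - 1) ∈ Y := by tauto
      exact absurd (addable_iff.mpr ⟨hmem, hup, hlf'⟩) hnC

lemma same_res_not_adjA {n : ℤ} {l : ℕ} (h1 : (1 : ZMod l) ≠ 0) {x y : ℕ × ℕ} (hne : x ≠ y)
    (h : resid n l y = resid n l x) : (y.1 - 1, y.2) ≠ x ∧ (y.1, y.2 - 1) ≠ x := by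
  constructor
  · refine up_ne (n := n) (l := l) hne ?_
    rw [h]
    intro hh; exact h1 (by linear_combination -hh)
  · refine lf_ne (n := n) (l := l) hne ?_
    rw [h]
    intro hh; exact h1 (by linear_combination hh)

lemma add_add_gap {n : ℤ} {l : ℕ} (hl : 3 ≤ l) {Y : YoungDiagram} {b b' : ℕ × ℕ}
    (hres : resid n l b' = resid n l b) (hb : Addable Y b)
    (hb' : Addable (addBox Y b) b') :
    Addable Y b' ∧ (3 ≤ ctZ b' - ctZ b ∨ 3 ≤ ctZ b - ctZ b') := by
  obtain ⟨hne, hnotY, hu, hlf⟩ := (addable_addBox_iff hb b').mp hb'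
  have hct : ((b'.2 : ℤ) - b'.1) ≠ ((b.2 : ℤ) - b.1) := by
    intro hcteq
    obtain ⟨m1, m2, m3, m4, m5, m6⟩ := lemUA hb hnotY hne hcteq
    rcases hu with h | h | h
    · exact m1 h
    · exact m3 h
    · exact m5 h
  have hgap := far_of_resid_eq hl hres hct
  have hgap' : 3 ≤ ctZ b' - ctZ b ∨ 3 ≤ ctZ b - ctZ b' := by
    rcases le_abs.mp hgap with h | h
    · exact Or.inl (by unfold ctZ at *; omega)
    · exact Or.inr (by unfold ctZ at *; omega)
  have hfar2 : 2 ≤ ctZ b' - ctZ b ∨ 2 ≤ ctZ b - ctZ b' := by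
    rcases hgap' with h | h
    · exact Or.inl (by omega)
    · exact Or.inr (by omega)
  have hfar := far_pair_add hne hfar2
  exact ⟨add_strip hb hb' hfar.1 hfar.2.1, hgap'⟩

lemma addBox3_cells {Y : YoungDiagram} {a b c : ℕ × ℕ} (h1 : Addable Y a)
    (h2 : Addable (addBox Y a) b) (h3 : Addable (addBox (addBox Y a) b) c) :
    (addBox (addBox (addBox Y a) b) c).cells = insert c (insert b (insert a Y.cells)) := by
  rw [addBox_cells h3, addBox_cells h2, addBox_cells h1]

lemma add3_perm_val {Y : YoungDiagram} {a b c a' b' c' : ℕ × ℕ} (h1 : Addable Y a)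
    (h2 : Addable (addBox Y a) b) (h3 : Addable (addBox (addBox Y a) b) c)
    (h1' : Addable Y a') (h2' : Addable (addBox Y a') b')
    (h3' : Addable (addBox (addBox Y a') b') c')
    (hperm : ∀ x : ℕ × ℕ, (x = a ∨ x = b ∨ x = c) ↔ (x = a' ∨ x = b' ∨ x = c')) :
    addBox (addBox (addBox Y a) b) c = addBox (addBox (addBox Y a') b') c' := by
  apply yd_ext
  rw [addBox3_cells h1 h2 h3, addBox3_cells h1' h2' h3']
  ext x
  simp only [Finset.mem_insert]
  have := hperm x
  constructor
  · rintro (h | h | h | h)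
    · have : x = a' ∨ x = b' ∨ x = c' := by tauto
      tauto
    · have : x = a' ∨ x = b' ∨ x = c' := by tauto
      tauto
    · have : x = a' ∨ x = b' ∨ x = c' := by tauto
      tauto
    · tauto
  · rintro (h | h | h | h)
    · have : x = a ∨ x = b ∨ x = c := by tauto
      tauto
    · have : x = a ∨ x = b ∨ x = c := by tauto
      tauto
    · have : x = a ∨ x = b ∨ x = c := by tauto
      tauto
    · tauto

section SerreF

variable {n : ℤ} {l : ℕ} {i j : ZMod l} {Y : YoungDiagram}

lemma B1f_core (hij : i ≠ j) {C b1 b2 : ℕ × ℕ}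
    (hrC : resid n l C = j) (hr1 : resid n l b1 = i) (hr2 : resid n l b2 = i)
    (hC : Addable Y C) (hb1 : Addable (addBox Y C) b1)
    (hb2 : Addable (addBox (addBox Y C) b1) b2) (hP : Addable Y b1) :
    Addable (addBox Y b1) C ∧
      Addable (addBox (addBox Y b1) C) b2 ∧
      addBox (addBox (addBox Y C) b1) b2 = addBox (addBox (addBox Y b1) C) b2 := by
  have hCb1 : C ≠ b1 := ne_of_res (by rw [hrC, hr1]; exact fun h => hij h.symm)
  have hC' : Addable (addBox Y b1) C := add_preserve hP hC hCb1
  have hswap : addBox (addBox Y C) b1 = addBox (addBox Y b1) C :=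
    swap_add_val hC hb1 hP hC'
  exact ⟨hC', hswap ▸ hb2, by rw [hswap]⟩

lemma B3f_core (hl : 3 ≤ l) (hij : i ≠ j) {b1 b2 C : ℕ × ℕ}
    (hr1 : resid n l b1 = i) (hr2 : resid n l b2 = i) (hrC : resid n l C = j)
    (hb1 : Addable Y b1) (hb2 : Addable (addBox Y b1) b2)
    (hC : Addable (addBox (addBox Y b1) b2) C) (hP : Addable (addBox Y b1) C) :
    Addable (addBox (addBox Y b1) C) b2 ∧
      Addable Y b2 ∧
      addBox (addBox (addBox Y b1) b2) C = addBox (addBox (addBox Y b1) C) b2 := by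
  have hb2C : b2 ≠ C := ne_of_res (by rw [hr2, hrC]; exact hij)
  have hb2' : Addable (addBox (addBox Y b1) C) b2 := add_preserve hP hb2 hb2C
  have hgap := add_add_gap hl (hr2.trans hr1.symm) hb1 hb2
  exact ⟨hb2', hgap.1, swap_add_val hb2 hC hP hb2'⟩

lemma B4f_core (hl : 3 ≤ l) (h1 : (1 : ZMod l) ≠ 0) (hij : i ≠ j) {C b1 b2 : ℕ × ℕ}
    (hrC : resid n l C = j) (hr1 : resid n l b1 = i) (hr2 : resid n l b2 = i)
    (hC : Addable Y C) (hb1 : Addable (addBox Y C) b1)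
    (hb2 : Addable (addBox (addBox Y C) b1) b2) (hP : ¬Addable Y b1) :
    Addable Y b2 ∧
      Addable (addBox Y b2) C ∧
      Addable (addBox (addBox Y b2) C) b1 ∧
      addBox (addBox (addBox Y C) b1) b2 = addBox (addBox (addBox Y b2) C) b1 := by
  have hCb1 : C ≠ b1 := ne_of_res (by rw [hrC, hr1]; exact fun h => hij h.symm)
  have hCb2 : C ≠ b2 := ne_of_res (by rw [hrC, hr2]; exact fun h => hij h.symm)
  have hadj := add_created hC hb1 hP
  have hgap := add_add_gap hl (hr2.trans hr1.symm) hb1 hb2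
  have hctC : ctZ C = ctZ b1 + 1 ∨ ctZ C = ctZ b1 - 1 := by
    rcases hadj with ⟨h, h0⟩ | ⟨h, h0⟩
    · exact Or.inl (adj_ct_up h h0)
    · exact Or.inr (adj_ct_lf h h0)
  have hfarCb2 : 2 ≤ ctZ C - ctZ b2 ∨ 2 ≤ ctZ b2 - ctZ C := by
    rcases hctC with h | h <;> rcases hgap.2 with h' | h' <;> omega
  have hfar := far_pair_add hCb2 hfarCb2
  have hb1ne2 : b1 ≠ b2 := (((addable_addBox_iff hb1 b2).mp hb2).1).symm
  have hb2Y : Addable Y b2 := add_strip hC hgap.1 hfar.2.2.1 hfar.2.2.2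
  have hC2 : Addable (addBox Y b2) C := add_preserve hb2Y hC hCb2
  have hb2C : Addable (addBox Y C) b2 := hgap.1
  have hswap1 : addBox (addBox Y C) b2 = addBox (addBox Y b2) C :=
    swap_add_val hC hb2C hb2Y hC2
  have hb1' : Addable (addBox (addBox Y C) b2) b1 := add_preserve hb2C hb1 hb1ne2
  refine ⟨hb2Y, hC2, hswap1 ▸ hb1', ?_⟩
  refine add3_perm_val hC hb1 hb2 hb2Y hC2 (hswap1 ▸ hb1') ?_
  intro z; constructor
  · rintro (h | h | h)
    · exact Or.inr (Or.inl h)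
    · exact Or.inr (Or.inr h)
    · exact Or.inl h
  · rintro (h | h | h)
    · exact Or.inr (Or.inr h)
    · exact Or.inl h
    · exact Or.inr (Or.inl h)

lemma B2f_core (hl : 3 ≤ l) (h1 : (1 : ZMod l) ≠ 0) (hij : i ≠ j) {b1 b2 C : ℕ × ℕ}
    (hr1 : resid n l b1 = i) (hr2 : resid n l b2 = i) (hrC : resid n l C = j)
    (hb1 : Addable Y b1) (hb2 : Addable (addBox Y b1) b2)
    (hC : Addable (addBox (addBox Y b1) b2) C) (hP : ¬Addable (addBox Y b1) C) :
    Addable Y b2 ∧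
      Addable (addBox Y b2) C ∧
      Addable (addBox (addBox Y b2) C) b1 ∧
      ¬Addable Y C ∧
      addBox (addBox (addBox Y b1) b2) C = addBox (addBox (addBox Y b2) C) b1 := by
  have hCb1 : C ≠ b1 := ne_of_res (by rw [hrC, hr1]; exact fun h => hij h.symm)
  have hCb2 : C ≠ b2 := ne_of_res (by rw [hrC, hr2]; exact fun h => hij h.symm)
  have hgap := add_add_gap hl (hr2.trans hr1.symm) hb1 hb2
  have hadj := add_created hb2 hC hP
  have hctC : ctZ b2 = ctZ C + 1 ∨ ctZ b2 = ctZ C - 1 := by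
    rcases hadj with ⟨h, h0⟩ | ⟨h, h0⟩
    · exact Or.inl (adj_ct_up h h0)
    · exact Or.inr (adj_ct_lf h h0)
  have hfarCb1 : 2 ≤ ctZ C - ctZ b1 ∨ 2 ≤ ctZ b1 - ctZ C := by
    rcases hctC with h | h <;> rcases hgap.2 with h' | h' <;> omega
  have hfar := far_pair_add hCb1 hfarCb1
  have hb1ne2 : b2 ≠ b1 := ((addable_addBox_iff hb1 b2).mp hb2).1
  have hb2Y : Addable Y b2 := hgap.1
  have hb1' : Addable (addBox Y b2) b1 := add_preserve hb2Y hb1 (Ne.symm hb1ne2)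
  have hswap1 : addBox (addBox Y b1) b2 = addBox (addBox Y b2) b1 :=
    swap_add_val hb1 hb2 hb2Y hb1'
  have hC2' : Addable (addBox (addBox Y b2) b1) C := hswap1 ▸ hC
  have hC2 : Addable (addBox Y b2) C := add_strip hb1' hC2' hfar.1 hfar.2.1
  have hb1'' : Addable (addBox (addBox Y b2) C) b1 := add_preserve hC2 hb1' hCb1.symm
  have hnC : ¬Addable Y C := fun h => hP (add_preserve hb1 h hCb1)
  refine ⟨hb2Y, hC2, hb1'', hnC, ?_⟩
  refine add3_perm_val hb1 hb2 hC hb2Y hC2 hb1'' ?_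
  intro z; constructor
  · rintro (h | h | h)
    · exact Or.inr (Or.inr h)
    · exact Or.inl h
    · exact Or.inr (Or.inl h)
  · rintro (h | h | h)
    · exact Or.inr (Or.inl h)
    · exact Or.inr (Or.inr h)
    · exact Or.inl h

lemma chain2A_mem {Y : YoungDiagram} {x C y : ℕ × ℕ} (hx : Addable Y x)
    (hC : Addable (addBox Y x) C) (hy : Addable (addBox (addBox Y x) C) y) :
    y ∉ Y ∧ y ≠ x ∧ y ≠ C := by
  obtain ⟨h0, h1, -, -⟩ := (addable_addBox_iff hC y).mp hy
  rw [mem_addBox hx] at h1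
  push_neg at h1
  exact ⟨h1.2, h1.1, h0⟩

lemma chain2A_excuse {Y : YoungDiagram} {x C y : ℕ × ℕ} (hx : Addable Y x)
    (hC : Addable (addBox Y x) C) (hy : Addable (addBox (addBox Y x) C) y) :
    (y.1 = 0 ∨ (y.1 - 1, y.2) ∈ Y ∨ (y.1 - 1, y.2) = x ∨ (y.1 - 1, y.2) = C) ∧
      (y.2 = 0 ∨ (y.1, y.2 - 1) ∈ Y ∨ (y.1, y.2 - 1) = x ∨ (y.1, y.2 - 1) = C) := by
  obtain ⟨-, -, hu, hlf⟩ := (addable_addBox_iff hC y).mp hy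
  constructor
  · rcases hu with h | h | h
    · exact Or.inl h
    · rw [mem_addBox hx] at h
      rcases h with h | h
      · exact Or.inr (Or.inr (Or.inl h))
      · exact Or.inr (Or.inl h)
    · exact Or.inr (Or.inr (Or.inr h))
  · rcases hlf with h | h | h
    · exact Or.inl h
    · rw [mem_addBox hx] at h
      rcases h with h | h
      · exact Or.inr (Or.inr (Or.inl h))
      · exact Or.inr (Or.inl h)
    · exact Or.inr (Or.inr (Or.inr h))

lemma ct_ne_of_excuseA {Y : YoungDiagram} {x C y : ℕ × ℕ} (hx : Addable Y x) (hy : y ∉ Y)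
    (hyx : y ≠ x)
    (hd : y.1 = 0 ∨ (y.1 - 1, y.2) ∈ Y ∨ (y.1 - 1, y.2) = x ∨ (y.1 - 1, y.2) = C)
    (hr : y.2 = 0 ∨ (y.1, y.2 - 1) ∈ Y ∨ (y.1, y.2 - 1) = x ∨ (y.1, y.2 - 1) = C)
    (hux : (y.1 - 1, y.2) ≠ x) (hlx : (y.1, y.2 - 1) ≠ x) : ctZ y ≠ ctZ x := by
  intro he
  obtain ⟨n1, n2, m3, m4, m5, m6⟩ := lemUA hx hy hyx he
  have huC : (y.1 - 1, y.2) = C := by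
    rcases hd with h | h | h | h
    · exact absurd h n1
    · exact absurd h m3
    · exact absurd h hux
    · exact h
  have hlC : (y.1, y.2 - 1) = C := by
    rcases hr with h | h | h | h
    · exact absurd h n2
    · exact absurd h m4
    · exact absurd h hlx
    · exact h
  rw [← hlC, Prod.mk.injEq] at huC
  omega

lemma B1f_inv (hij : i ≠ j) {x C y : ℕ × ℕ}
    (hrx : resid n l x = i) (hrC : resid n l C = j)
    (hx : Addable Y x) (hC : Addable (addBox Y x) C)
    (hy : Addable (addBox (addBox Y x) C) y) (hQ : Addable Y C) :
    Addable (addBox Y C) x ∧ Addable (addBox (addBox Y C) x) y := by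
  have hxC : x ≠ C := ne_of_res (by rw [hrx, hrC]; exact hij)
  have hx' : Addable (addBox Y C) x := add_preserve hQ hx hxC
  have hswap : addBox (addBox Y x) C = addBox (addBox Y C) x :=
    swap_add_val hx hC hQ hx'
  exact ⟨hx', hswap ▸ hy⟩

lemma B3f_inv (hij : i ≠ j) {x C y : ℕ × ℕ}
    (hrC : resid n l C = j) (hry : resid n l y = i)
    (hx : Addable Y x) (hC : Addable (addBox Y x) C)
    (hy : Addable (addBox (addBox Y x) C) y) (hQ : Addable Y y) :
    Addable (addBox Y x) y ∧ Addable (addBox (addBox Y x) y) C := by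
  obtain ⟨hymem, hyx, hyC⟩ := chain2A_mem hx hC hy
  have hCy : C ≠ y := ne_of_res (by rw [hrC, hry]; exact fun h => hij h.symm)
  have hy' : Addable (addBox Y x) y := add_preserve hx hQ hyx
  exact ⟨hy', add_preserve hy' hC hCy⟩

lemma B4f_inv (hl : 3 ≤ l) (h1 : (1 : ZMod l) ≠ 0) (hij : i ≠ j) {x C y : ℕ × ℕ}
    (hrx : resid n l x = i) (hrC : resid n l C = j) (hry : resid n l y = i)
    (hx : Addable Y x) (hC : Addable (addBox Y x) C)
    (hy : Addable (addBox (addBox Y x) C) y) (hnQ : ¬Addable Y y) :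
    Addable Y C ∧ Addable (addBox Y C) y ∧ Addable (addBox (addBox Y C) y) x := by
  obtain ⟨hymem, hyx, hyC⟩ := chain2A_mem hx hC hy
  obtain ⟨hd, hr⟩ := chain2A_excuse hx hC hy
  have hxC : x ≠ C := ne_of_res (by rw [hrx, hrC]; exact hij)
  have hnadj := same_res_not_adjA h1 (fun h => hyx h.symm) (hry.trans hrx.symm)
  have hct : ctZ y ≠ ctZ x := ct_ne_of_excuseA hx hymem hyx hd hr hnadj.1 hnadj.2
  have hgap := far_of_resid_eq hl (hry.trans hrx.symm) hct
  have hgap' : 3 ≤ ctZ y - ctZ x ∨ 3 ≤ ctZ x - ctZ y := by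
    rcases le_abs.mp hgap with h | h
    · exact Or.inl (by unfold ctZ at *; omega)
    · exact Or.inr (by unfold ctZ at *; omega)
  have hadjC : ((y.1 - 1, y.2) = C ∧ y.1 ≠ 0) ∨ ((y.1, y.2 - 1) = C ∧ y.2 ≠ 0) := by
    by_cases hy1 : y.1 = 0 ∨ (y.1 - 1, y.2) ∈ Y
    · by_cases hy2 : y.2 = 0 ∨ (y.1, y.2 - 1) ∈ Y
      · exact absurd (addable_iff.mpr ⟨hymem, hy1, hy2⟩) hnQ
      · push_neg at hy2
        rcases hr with h | h | h | h
        · exact absurd h hy2.1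
        · exact absurd h hy2.2
        · exact absurd h hnadj.2
        · exact Or.inr ⟨h, hy2.1⟩
    · push_neg at hy1
      rcases hd with h | h | h | h
      · exact absurd h hy1.1
      · exact absurd h hy1.2
      · exact absurd h hnadj.1
      · exact Or.inl ⟨h, hy1.1⟩
  have hctC : ctZ C = ctZ y + 1 ∨ ctZ C = ctZ y - 1 := by
    rcases hadjC with ⟨h, h0⟩ | ⟨h, h0⟩
    · exact Or.inl (adj_ct_up h h0)
    · exact Or.inr (adj_ct_lf h h0)
  have hfarCx : 2 ≤ ctZ C - ctZ x ∨ 2 ≤ ctZ x - ctZ C := by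
    rcases hctC with h | h <;> rcases hgap' with h' | h' <;> omega
  have hfar := far_pair_add (fun h => hxC h.symm) hfarCx
  have hQC : Addable Y C := add_strip hx hC hfar.1 hfar.2.1
  have hx' : Addable (addBox Y C) x := add_preserve hQC hx hxC
  have hswap : addBox (addBox Y x) C = addBox (addBox Y C) x :=
    swap_add_val hx hC hQC hx'
  have hy' : Addable (addBox (addBox Y C) x) y := hswap ▸ hy
  have hy'' : Addable (addBox Y C) y := add_strip hx' hy' hnadj.1 hnadj.2
  exact ⟨hQC, hy'', add_preserve hy'' hx' (fun h => hyx h.symm)⟩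

lemma B2f_inv (hl : 3 ≤ l) (h1 : (1 : ZMod l) ≠ 0) (hij : i ≠ j) {x C y : ℕ × ℕ}
    (hrx : resid n l x = i) (hrC : resid n l C = j) (hry : resid n l y = i)
    (hx : Addable Y x) (hC : Addable (addBox Y x) C)
    (hy : Addable (addBox (addBox Y x) C) y) (hnQ : ¬Addable Y C) :
    Addable Y y ∧ Addable (addBox Y y) x ∧
      Addable (addBox (addBox Y y) x) C ∧ ¬Addable (addBox Y y) C := by
  obtain ⟨hymem, hyx, hyC⟩ := chain2A_mem hx hC hy
  obtain ⟨hd, hr⟩ := chain2A_excuse hx hC hy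
  have hCy : C ≠ y := ne_of_res (by rw [hrC, hry]; exact fun h => hij h.symm)
  have hnadj := same_res_not_adjA h1 (fun h => hyx h.symm) (hry.trans hrx.symm)
  have hct : ctZ y ≠ ctZ x := ct_ne_of_excuseA hx hymem hyx hd hr hnadj.1 hnadj.2
  have hgap := far_of_resid_eq hl (hry.trans hrx.symm) hct
  have hgap' : 3 ≤ ctZ y - ctZ x ∨ 3 ≤ ctZ x - ctZ y := by
    rcases le_abs.mp hgap with h | h
    · exact Or.inl (by unfold ctZ at *; omega)
    · exact Or.inr (by unfold ctZ at *; omega)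
  have hadjC := add_created hx hC hnQ
  have hctC : ctZ x = ctZ C + 1 ∨ ctZ x = ctZ C - 1 := by
    rcases hadjC with ⟨h, h0⟩ | ⟨h, h0⟩
    · exact Or.inl (adj_ct_up h h0)
    · exact Or.inr (adj_ct_lf h h0)
  have hfarCy : 2 ≤ ctZ C - ctZ y ∨ 2 ≤ ctZ y - ctZ C := by
    rcases hctC with h | h <;> rcases hgap' with h' | h' <;> omega
  have hfar := far_pair_add hCy hfarCy
  have hy1 : Addable (addBox Y x) y := add_strip hC hy hfar.2.2.1 hfar.2.2.2
  have hy2 : Addable Y y := add_strip hx hy1 hnadj.1 hnadj.2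
  have hx' : Addable (addBox Y y) x := add_preserve hy2 hx (fun h => hyx h.symm)
  have hC1 : Addable (addBox (addBox Y x) y) C := add_preserve hy1 hC hCy
  have hswap : addBox (addBox Y x) y = addBox (addBox Y y) x :=
    swap_add_val hx hy1 hy2 hx'
  refine ⟨hy2, hx', hswap ▸ hC1, ?_⟩
  intro h
  exact hnQ (add_strip hy2 h hfar.1 hfar.2.1)

end SerreF

noncomputable def WF (n : ℤ) (l : ℕ) (i1 i2 i3 : ZMod l) (Y : YoungDiagram) :
    Finset ((_ : ℕ × ℕ) × (_ : ℕ × ℕ) × ℕ × ℕ) :=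
  (AF n l i3 Y).sigma (fun a => (AF n l i2 (addBox Y a)).sigma
    (fun b => AF n l i1 (addBox (addBox Y a) b)))

lemma mem_WF {n : ℤ} {l : ℕ} {i1 i2 i3 : ZMod l} {Y : YoungDiagram}
    {x : (_ : ℕ × ℕ) × (_ : ℕ × ℕ) × ℕ × ℕ} :
    x ∈ WF n l i1 i2 i3 Y ↔ x.1 ∈ AF n l i3 Y ∧ x.2.1 ∈ AF n l i2 (addBox Y x.1)
      ∧ x.2.2 ∈ AF n l i1 (addBox (addBox Y x.1) x.2.1) := by
  obtain ⟨a, b, c⟩ := x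
  simp only [WF, Finset.mem_sigma]

lemma fff_single (n : ℤ) (l : ℕ) (i1 i2 i3 : ZMod l) (Y : YoungDiagram) :
    fRes n l i1 (fRes n l i2 (fRes n l i3 (Finsupp.single Y 1))) =
      -∑ x ∈ WF n l i1 i2 i3 Y,
        Finsupp.single (addBox (addBox (addBox Y x.1) x.2.1) x.2.2) (1 : ℤ) := by
  rw [fRes_single n l i3 Y, map_neg, map_sum]
  simp only [fRes_single]
  rw [Finset.sum_neg_distrib, neg_neg, map_sum]
  simp only [map_sum, fRes_single]
  simp only [Finset.sum_neg_distrib]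
  rw [WF]
  congr 1
  exact sum_sigma3 _ _ _ _

lemma serre_f (n : ℤ) (l : ℕ) (hl : 3 ≤ l) (i j : ZMod l) (hij : i = j + 1 ∨ i = j - 1) :
    fRes n l i * (fRes n l i * fRes n l j - fRes n l j * fRes n l i)
      - (fRes n l i * fRes n l j - fRes n l j * fRes n l i) * fRes n l i = 0 := by
  have h1 : (1 : ZMod l) ≠ 0 := zmod_one_ne_zero hl
  have hijne : i ≠ j := by
    rcases hij with h | h
    · rw [h]; intro hh; exact h1 (by linear_combination hh)
    · rw [h]; intro hh; exact h1 (by linear_combination -hh)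
  have expand : fRes n l i * (fRes n l i * fRes n l j - fRes n l j * fRes n l i)
      - (fRes n l i * fRes n l j - fRes n l j * fRes n l i) * fRes n l i
      = (fRes n l i * (fRes n l i * fRes n l j) + fRes n l j * (fRes n l i * fRes n l i))
        - (fRes n l i * (fRes n l j * fRes n l i) + fRes n l i * (fRes n l j * fRes n l i)) := by
    noncomm_ring
  rw [expand, sub_eq_zero]
  apply end_ext
  intro Y
  simp only [LinearMap.add_apply, Module.End.mul_apply]
  rw [fff_single n l i i j Y, fff_single n l j i i Y, fff_single n l i j i Y]
  rw [← neg_add, ← neg_add, neg_inj]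
  rw [← Finset.sum_filter_add_sum_filter_not (WF n l i i j Y) (fun x => Addable Y x.2.1),
      ← Finset.sum_filter_add_sum_filter_not (WF n l j i i Y)
        (fun x => Addable (addBox Y x.1) x.2.2)]
  have hQ2 : ∑ x ∈ WF n l i j i Y,
        Finsupp.single (addBox (addBox (addBox Y x.1) x.2.1) x.2.2) (1 : ℤ)
      = (∑ x ∈ (WF n l i j i Y).filter (fun x => Addable Y x.2.2),
          Finsupp.single (addBox (addBox (addBox Y x.1) x.2.1) x.2.2) (1 : ℤ))
        + ∑ x ∈ (WF n l i j i Y).filter (fun x => ¬Addable Y x.2.2),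
          Finsupp.single (addBox (addBox (addBox Y x.1) x.2.1) x.2.2) (1 : ℤ) :=
    (Finset.sum_filter_add_sum_filter_not _ _ _).symm
  have hQ1 : ∑ x ∈ WF n l i j i Y,
        Finsupp.single (addBox (addBox (addBox Y x.1) x.2.1) x.2.2) (1 : ℤ)
      = (∑ x ∈ (WF n l i j i Y).filter (fun x => Addable Y x.2.1),
          Finsupp.single (addBox (addBox (addBox Y x.1) x.2.1) x.2.2) (1 : ℤ))
        + ∑ x ∈ (WF n l i j i Y).filter (fun x => ¬Addable Y x.2.1),
          Finsupp.single (addBox (addBox (addBox Y x.1) x.2.1) x.2.2) (1 : ℤ) :=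
    (Finset.sum_filter_add_sum_filter_not _ _ _).symm
  nth_rewrite 2 [hQ2]
  rw [hQ1]
  have e1 : ∑ x ∈ (WF n l i i j Y).filter (fun x => Addable Y x.2.1),
        Finsupp.single (addBox (addBox (addBox Y x.1) x.2.1) x.2.2) (1 : ℤ)
      = ∑ x ∈ (WF n l i j i Y).filter (fun x => Addable Y x.2.1),
        Finsupp.single (addBox (addBox (addBox Y x.1) x.2.1) x.2.2) (1 : ℤ) := by
    refine Finset.sum_bij' (fun x _ => ⟨x.2.1, x.1, x.2.2⟩) (fun x _ => ⟨x.2.1, x.1, x.2.2⟩)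
      ?_ ?_ ?_ ?_ ?_
    · rintro ⟨C, b1, b2⟩ hx
      rw [Finset.mem_filter, mem_WF] at hx
      obtain ⟨⟨hC, hb1, hb2⟩, hP⟩ := hx
      rw [mem_AF] at hC hb1 hb2
      obtain ⟨hc1, hc2, -⟩ := B1f_core hijne hC.2 hb1.2 hb2.2 hC.1 hb1.1 hb2.1 hP
      rw [Finset.mem_filter, mem_WF]
      exact ⟨⟨mem_AF.mpr ⟨hP, hb1.2⟩, mem_AF.mpr ⟨hc1, hC.2⟩, mem_AF.mpr ⟨hc2, hb2.2⟩⟩, hC.1⟩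
    · rintro ⟨x, C, y⟩ hw
      rw [Finset.mem_filter, mem_WF] at hw
      obtain ⟨⟨hx, hC, hy⟩, hQ⟩ := hw
      rw [mem_AF] at hx hC hy
      obtain ⟨hc1, hc2⟩ := B1f_inv hijne hx.2 hC.2 hx.1 hC.1 hy.1 hQ
      rw [Finset.mem_filter, mem_WF]
      exact ⟨⟨mem_AF.mpr ⟨hQ, hC.2⟩, mem_AF.mpr ⟨hc1, hx.2⟩, mem_AF.mpr ⟨hc2, hy.2⟩⟩, hx.1⟩
    · rintro ⟨a, b, c⟩ _; rfl
    · rintro ⟨a, b, c⟩ _; rfl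
    · rintro ⟨C, b1, b2⟩ hx
      rw [Finset.mem_filter, mem_WF] at hx
      obtain ⟨⟨hC, hb1, hb2⟩, hP⟩ := hx
      rw [mem_AF] at hC hb1 hb2
      obtain ⟨-, -, hval⟩ := B1f_core hijne hC.2 hb1.2 hb2.2 hC.1 hb1.1 hb2.1 hP
      rw [hval]
  have e2 : ∑ x ∈ (WF n l i i j Y).filter (fun x => ¬Addable Y x.2.1),
        Finsupp.single (addBox (addBox (addBox Y x.1) x.2.1) x.2.2) (1 : ℤ)
      = ∑ x ∈ (WF n l i j i Y).filter (fun x => ¬Addable Y x.2.2),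
        Finsupp.single (addBox (addBox (addBox Y x.1) x.2.1) x.2.2) (1 : ℤ) := by
    refine Finset.sum_bij' (fun x _ => ⟨x.2.2, x.1, x.2.1⟩) (fun x _ => ⟨x.2.1, x.2.2, x.1⟩)
      ?_ ?_ ?_ ?_ ?_
    · rintro ⟨C, b1, b2⟩ hx
      rw [Finset.mem_filter, mem_WF] at hx
      obtain ⟨⟨hC, hb1, hb2⟩, hP⟩ := hx
      rw [mem_AF] at hC hb1 hb2
      obtain ⟨hb2Y, hC2, hb1'', -⟩ := B4f_core hl h1 hijne hC.2 hb1.2 hb2.2 hC.1 hb1.1 hb2.1 hP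
      rw [Finset.mem_filter, mem_WF]
      exact ⟨⟨mem_AF.mpr ⟨hb2Y, hb2.2⟩, mem_AF.mpr ⟨hC2, hC.2⟩, mem_AF.mpr ⟨hb1'', hb1.2⟩⟩, hP⟩
    · rintro ⟨x, C, y⟩ hw
      rw [Finset.mem_filter, mem_WF] at hw
      obtain ⟨⟨hx, hC, hy⟩, hnQ⟩ := hw
      rw [mem_AF] at hx hC hy
      obtain ⟨hQC, hy'', hx''⟩ := B4f_inv hl h1 hijne hx.2 hC.2 hy.2 hx.1 hC.1 hy.1 hnQ
      rw [Finset.mem_filter, mem_WF]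
      exact ⟨⟨mem_AF.mpr ⟨hQC, hC.2⟩, mem_AF.mpr ⟨hy'', hy.2⟩, mem_AF.mpr ⟨hx'', hx.2⟩⟩, hnQ⟩
    · rintro ⟨a, b, c⟩ _; rfl
    · rintro ⟨a, b, c⟩ _; rfl
    · rintro ⟨C, b1, b2⟩ hx
      rw [Finset.mem_filter, mem_WF] at hx
      obtain ⟨⟨hC, hb1, hb2⟩, hP⟩ := hx
      rw [mem_AF] at hC hb1 hb2
      obtain ⟨-, -, -, hval⟩ := B4f_core hl h1 hijne hC.2 hb1.2 hb2.2 hC.1 hb1.1 hb2.1 hP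
      rw [hval]
  have e3 : ∑ x ∈ (WF n l j i i Y).filter (fun x => Addable (addBox Y x.1) x.2.2),
        Finsupp.single (addBox (addBox (addBox Y x.1) x.2.1) x.2.2) (1 : ℤ)
      = ∑ x ∈ (WF n l i j i Y).filter (fun x => Addable Y x.2.2),
        Finsupp.single (addBox (addBox (addBox Y x.1) x.2.1) x.2.2) (1 : ℤ) := by
    refine Finset.sum_bij' (fun x _ => ⟨x.1, x.2.2, x.2.1⟩) (fun x _ => ⟨x.1, x.2.2, x.2.1⟩)
      ?_ ?_ ?_ ?_ ?_
    · rintro ⟨b1, b2, C⟩ hx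
      rw [Finset.mem_filter, mem_WF] at hx
      obtain ⟨⟨hb1, hb2, hC⟩, hP⟩ := hx
      rw [mem_AF] at hb1 hb2 hC
      obtain ⟨hb2', hb2Y, -⟩ := B3f_core hl hijne hb1.2 hb2.2 hC.2 hb1.1 hb2.1 hC.1 hP
      rw [Finset.mem_filter, mem_WF]
      exact ⟨⟨mem_AF.mpr ⟨hb1.1, hb1.2⟩, mem_AF.mpr ⟨hP, hC.2⟩, mem_AF.mpr ⟨hb2', hb2.2⟩⟩, hb2Y⟩
    · rintro ⟨x, C, y⟩ hw
      rw [Finset.mem_filter, mem_WF] at hw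
      obtain ⟨⟨hx, hC, hy⟩, hQ⟩ := hw
      rw [mem_AF] at hx hC hy
      obtain ⟨hy', hC'⟩ := B3f_inv hijne hC.2 hy.2 hx.1 hC.1 hy.1 hQ
      rw [Finset.mem_filter, mem_WF]
      exact ⟨⟨mem_AF.mpr ⟨hx.1, hx.2⟩, mem_AF.mpr ⟨hy', hy.2⟩, mem_AF.mpr ⟨hC', hC.2⟩⟩, hC.1⟩
    · rintro ⟨a, b, c⟩ _; rfl
    · rintro ⟨a, b, c⟩ _; rfl
    · rintro ⟨b1, b2, C⟩ hx
      rw [Finset.mem_filter, mem_WF] at hx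
      obtain ⟨⟨hb1, hb2, hC⟩, hP⟩ := hx
      rw [mem_AF] at hb1 hb2 hC
      obtain ⟨-, -, hval⟩ := B3f_core hl hijne hb1.2 hb2.2 hC.2 hb1.1 hb2.1 hC.1 hP
      rw [hval]
  have e4 : ∑ x ∈ (WF n l j i i Y).filter (fun x => ¬Addable (addBox Y x.1) x.2.2),
        Finsupp.single (addBox (addBox (addBox Y x.1) x.2.1) x.2.2) (1 : ℤ)
      = ∑ x ∈ (WF n l i j i Y).filter (fun x => ¬Addable Y x.2.1),
        Finsupp.single (addBox (addBox (addBox Y x.1) x.2.1) x.2.2) (1 : ℤ) := by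
    refine Finset.sum_bij' (fun x _ => ⟨x.2.1, x.2.2, x.1⟩) (fun x _ => ⟨x.2.2, x.1, x.2.1⟩)
      ?_ ?_ ?_ ?_ ?_
    · rintro ⟨b1, b2, C⟩ hx
      rw [Finset.mem_filter, mem_WF] at hx
      obtain ⟨⟨hb1, hb2, hC⟩, hP⟩ := hx
      rw [mem_AF] at hb1 hb2 hC
      obtain ⟨hb2Y, hC2, hb1'', hnC, -⟩ :=
        B2f_core hl h1 hijne hb1.2 hb2.2 hC.2 hb1.1 hb2.1 hC.1 hP
      rw [Finset.mem_filter, mem_WF]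
      exact ⟨⟨mem_AF.mpr ⟨hb2Y, hb2.2⟩, mem_AF.mpr ⟨hC2, hC.2⟩, mem_AF.mpr ⟨hb1'', hb1.2⟩⟩, hnC⟩
    · rintro ⟨x, C, y⟩ hw
      rw [Finset.mem_filter, mem_WF] at hw
      obtain ⟨⟨hx, hC, hy⟩, hnQ⟩ := hw
      rw [mem_AF] at hx hC hy
      obtain ⟨hy2, hx', hC'', hnP3⟩ := B2f_inv hl h1 hijne hx.2 hC.2 hy.2 hx.1 hC.1 hy.1 hnQ
      rw [Finset.mem_filter, mem_WF]
      exact ⟨⟨mem_AF.mpr ⟨hy2, hy.2⟩, mem_AF.mpr ⟨hx', hx.2⟩, mem_AF.mpr ⟨hC'', hC.2⟩⟩, hnP3⟩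
    · rintro ⟨a, b, c⟩ _; rfl
    · rintro ⟨a, b, c⟩ _; rfl
    · rintro ⟨b1, b2, C⟩ hx
      rw [Finset.mem_filter, mem_WF] at hx
      obtain ⟨⟨hb1, hb2, hC⟩, hP⟩ := hx
      rw [mem_AF] at hb1 hb2 hC
      obtain ⟨-, -, -, -, hval⟩ :=
        B2f_core hl h1 hijne hb1.2 hb2.2 hC.2 hb1.1 hb2.1 hC.1 hP
      rw [hval]
  rw [e1, e2, e3, e4]
  abel


/-- The operators `e_i`, `f_i`, `h_i` (`i ∈ ℤ/lℤ`) define a representation of the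
affine Lie algebra `ŝl_l` on the Fock space. -/
theorem fock_space_affine_sl_representation (n : ℤ) (l : ℕ) (hl : 3 ≤ l) :
    (∀ i j : ZMod l,
      eRes n l i * fRes n l j - fRes n l j * eRes n l i
        = if i = j then hRes n l i else 0) ∧
    (∀ i j : ZMod l, hRes n l i * hRes n l j = hRes n l j * hRes n l i) ∧
    (∀ i j : ZMod l,
      hRes n l i * eRes n l j - eRes n l j * hRes n l i
        = aCartanMod l i j • eRes n l j) ∧
    (∀ i j : ZMod l,
      hRes n l i * fRes n l j - fRes n l j * hRes n l i
        = -aCartanMod l i j • fRes n l j) ∧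
    (∀ i j : ZMod l, i ≠ j → i ≠ j + 1 → i ≠ j - 1 →
      eRes n l i * eRes n l j = eRes n l j * eRes n l i ∧
      fRes n l i * fRes n l j = fRes n l j * fRes n l i) ∧
    (∀ i j : ZMod l, (i = j + 1 ∨ i = j - 1) →
      eRes n l i * (eRes n l i * eRes n l j - eRes n l j * eRes n l i)
        - (eRes n l i * eRes n l j - eRes n l j * eRes n l i) * eRes n l i = 0 ∧
      fRes n l i * (fRes n l i * fRes n l j - fRes n l j * fRes n l i)
        - (fRes n l i * fRes n l j - fRes n l j * fRes n l i) * fRes n l i = 0) := by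
  
  refine ⟨fun i j => rel1 n l hl i j, fun i j => rel2 n l i j,
    fun i j => rel3 n l hl i j, fun i j => rel4 n l hl i j, ?_, ?_⟩
  · intro i j hij hij1 hij2
    have hji1 : j ≠ i + 1 := by
      intro h; exact hij2 (by rw [h]; ring)
    have hji2 : j ≠ i - 1 := by
      intro h; exact hij1 (by rw [h]; ring)
    exact ⟨rel5e n l i j hij1 hij2 hji1 hji2, rel5f n l i j hij1 hij2 hji1 hji2⟩
  · intro i j hij
    exact ⟨serre_e n l hl i j hij, serre_f n l hl i j hij⟩
end

section
/- Fix integers l ≥ 2 and i ≥ 1. Let P be the commutative polynomial ring over ℤ in variables x_{k,m} for integers k ≥ 1 and 0 ≤ m ≤ l−1, with the convention x_{0,m} := 1. Let A be the l×l matrix over the power series ring P[[t]] with entries A_{r,c} = Σ_s x_{l·s + r − c, c} · tˢ for r,c ∈ {0,…,l−1}, the sum over all integers s ≥ 0 with l·s + r − c ≥ 0. Let a_i ∈ P be the coefficient of t^i in det A. Then the coefficient in a_i of the monomial x_{i,0}·x_{i,1}⋯x_{i,l−1} equals the sign of the permutation of {0,…,l−1} given by c ↦ c + i (mod l). -/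
/-- The generator `x_{k,m}` (for `k ≥ 1`) of the polynomial ring, with the convention
`x_{0,m} = 1`. -/
noncomputable def xv (l : ℕ) (k : ℕ) (m : Fin l) : MvPolynomial (ℕ × Fin l) ℤ :=
  if k = 0 then 1 else MvPolynomial.X (k, m)

/-- The `l×l` matrix over `P[[t]]` with entries
`A_{r,c} = Σ_s x_{l·s+r−c, c}·tˢ`, the sum over all `s ≥ 0` with `l·s + r − c ≥ 0`. -/
noncomputable def Amat (l : ℕ) :
    Matrix (Fin l) (Fin l) (PowerSeries (MvPolynomial (ℕ × Fin l) ℤ)) :=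
  fun r c => PowerSeries.mk fun s =>
    if 0 ≤ ((l : ℤ) * (s : ℤ) + ((r : ℕ) : ℤ) - ((c : ℕ) : ℤ)) then
      xv l ((l : ℤ) * (s : ℤ) + ((r : ℕ) : ℤ) - ((c : ℕ) : ℤ)).toNat c
    else 0

/-! Expanding the determinant, the `t^i`-coefficient of `det A` is a signed sum, over
permutations `σ` and compositions `d` of `i` into `l` parts, of the products
`∏_c x_{l·d_c + σ(c) − c, c}` (read as `0` if some index is negative). Since `i ≥ 1` and
`x_{0,c} = 1`, such a product is the monomial `x_{i,0}⋯x_{i,l−1}` exactly when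
`l·d_c + σ(c) = i + c` for all `c`, i.e. when `d_c` and `σ(c)` are the quotient and remainder
of `c + i` by `l`. So the only contribution comes from the rotation `σ = finRotate l ^ i`. -/

open MvPolynomial Finset Equiv

lemma PowerSeries.coeff_det {n R : Type*} [Fintype n] [DecidableEq n] [CommRing R]
    (M : Matrix n n (PowerSeries R)) (k : ℕ) :
    PowerSeries.coeff k M.det = ∑ σ : Perm n, Perm.sign σ •
      ∑ d ∈ univ.finsuppAntidiag k, ∏ c, PowerSeries.coeff (d c) (M (σ c) c) := by
  simp only [Matrix.det_apply, map_sum, Units.smul_def, map_zsmul, PowerSeries.coeff_prod]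

lemma xv_eq_monomial (l k : ℕ) (c : Fin l) :
    xv l k c = monomial (if k = 0 then 0 else Finsupp.single (k, c) 1) 1 := by
  unfold xv; split_ifs <;> rfl

lemma coeff_prod_xv {l i : ℕ} (hi : i ≠ 0) (k : Fin l → ℕ) :
    coeff (∑ m : Fin l, Finsupp.single (i, m) 1) (∏ c, xv l (k c) c)
      = if ∀ c, k c = i then 1 else 0 := by
  simp only [xv_eq_monomial, ← monomial_sum_one, coeff_monomial]
  congr 1
  refine propext ⟨fun h c => ?_, fun h => sum_congr rfl fun c _ => by simp [h c, hi]⟩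
  have := DFunLike.congr_fun h (i, c)
  simp only [Finsupp.finsetSum_apply, Finsupp.single_apply,
    apply_ite (fun f : _ →₀ ℕ => f (i, c)), Finsupp.coe_zero, Pi.zero_apply, Prod.mk.injEq, true_and, sum_ite_eq', mem_univ, if_true] at this
  rw [Finset.sum_eq_single c (fun b _ hb => by simp [hb]) (by simp)] at this
  by_contra hne
  simp [hne] at this

lemma coeff_Amat (l s : ℕ) (r c : Fin l) :
    PowerSeries.coeff s (Amat l r c) =
      if (c : ℕ) ≤ l * s + r then xv l (l * s + r - c) c else 0 := by
  rw [Amat, PowerSeries.coeff_mk]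
  split_ifs <;> first | rfl | omega | (congr 2; omega)

lemma finRotate_pow_apply_val (l i : ℕ) (c : Fin l) : ((finRotate l ^ i) c : ℕ) = (c + i) % l := by
  induction i with
  | zero => simp [Nat.mod_eq_of_lt c.isLt]
  | succ i ih =>
    have := c.neZero
    rw [pow_succ', Perm.mul_apply, finRotate_apply, Fin.val_add, ih, Fin.val_one']
    simp [Nat.add_mod, ← add_assoc]

lemma forall_mul_add_perm_eq_iff {l i : ℕ} (σ : Perm (Fin l)) (d : Fin l → ℕ) :
    (∀ c : Fin l, l * d c + σ c = i + c) ↔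
      σ = finRotate l ^ i ∧ d = fun c : Fin l => ((c : ℕ) + i) / l := by
  constructor
  · intro h
    have hσ : ∀ c, (σ c : ℕ) = (c + i) % l := fun c => by
      rw [← Nat.mod_eq_of_lt (σ c).isLt, ← Nat.mul_add_mod l (d c), h c, add_comm]
    refine ⟨Equiv.ext fun c => Fin.ext ?_, funext fun c => ?_⟩
    · rw [hσ, finRotate_pow_apply_val]
    · have := h c
      have := Nat.div_add_mod (c + i) l
      have : l * d c = l * ((c + i) / l) := by rw [hσ] at *; omega
      exact Nat.eq_of_mul_eq_mul_left c.pos this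
  · rintro ⟨rfl, rfl⟩ c
    rw [finRotate_pow_apply_val, add_comm i, Nat.div_add_mod]

lemma sum_eq_of_forall_mul_add_perm_eq {l i : ℕ} (hl : 0 < l) (σ : Perm (Fin l)) (d : Fin l → ℕ)
    (h : ∀ c : Fin l, l * d c + σ c = i + c) : ∑ c, d c = i := by
  have hsum := Fintype.sum_congr _ _ h
  rw [sum_add_distrib, sum_add_distrib, ← mul_sum,
    Equiv.sum_comp σ (fun c : Fin l => (c : ℕ))] at hsum
  simp only [sum_const, card_univ, Fintype.card_fin, smul_eq_mul] at hsum
  exact Nat.eq_of_mul_eq_mul_left hl (by linarith)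

lemma coeff_prod_coeff_Amat {l i : ℕ} (hi : i ≠ 0) (r : Fin l → Fin l) (d : Fin l → ℕ) :
    coeff (∑ m : Fin l, Finsupp.single (i, m) 1) (∏ c, PowerSeries.coeff (d c) (Amat l (r c) c))
      = if ∀ c : Fin l, l * d c + r c = i + c then 1 else 0 := by
  by_cases hle : ∀ c : Fin l, (c : ℕ) ≤ l * d c + r c
  · simp only [coeff_Amat, if_pos (hle _), coeff_prod_xv hi]
    exact if_congr (forall_congr' fun c => by have := hle c; omega) rfl rfl
  · push Not at hle
    obtain ⟨c, hc⟩ := hle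
    rw [prod_eq_zero (mem_univ c) (by rw [coeff_Amat, if_neg hc.not_ge]), coeff_zero, if_neg]
    exact fun h => by have := h c; omega

/-- Let `a_i` be the coefficient of `t^i` in `det A`. The coefficient in `a_i` of the
monomial `x_{i,0}·x_{i,1}⋯x_{i,l−1}` equals the sign of the permutation of
`{0,…,l−1}` given by `c ↦ c + i (mod l)`. -/
theorem det_coeff_leading_monomial (l : ℕ) (hl : 2 ≤ l) (i : ℕ) (hi : 1 ≤ i) :
    MvPolynomial.coeff (∑ m : Fin l, Finsupp.single ((i, m) : ℕ × Fin l) 1)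
        (PowerSeries.coeff (R := MvPolynomial (ℕ × Fin l) ℤ) i (Matrix.det (Amat l)))
      = ((Equiv.Perm.sign ((finRotate l) ^ i) : ℤˣ) : ℤ) := by
  classical
  set d₀ : Fin l →₀ ℕ := Finsupp.equivFunOnFinite.symm fun c : Fin l => ((c : ℕ) + i) / l
  have hd₀ : d₀ ∈ univ.finsuppAntidiag i := mem_finsuppAntidiag.2
    ⟨sum_eq_of_forall_mul_add_perm_eq (by omega) _ d₀ ((forall_mul_add_perm_eq_iff _ _).2 ⟨rfl, rfl⟩), subset_univ _⟩
  have hcoe : ∀ d : Fin l →₀ ℕ, (⇑d = fun c : Fin l => ((c : ℕ) + i) / l) ↔ d = d₀ :=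
    fun d => (Equiv.eq_symm_apply Finsupp.equivFunOnFinite).symm
  simp only [PowerSeries.coeff_det, coeff_sum, Units.smul_def, coeff_smul,
    coeff_prod_coeff_Amat (Nat.one_le_iff_ne_zero.1 hi), forall_mul_add_perm_eq_iff, hcoe, ite_and]
  simp [sum_ite_irrel, sum_ite_eq', hd₀]
end
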